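/- arXiv:2110.04905 — 7 statements merged into one kernel-verified Lean document; each statement's English description precedes it below -/
import Mathlib

section
/- Every well-rounded full-rank lattice L in ℝ² is similar to a unique lattice of the form M(x) with x ∈ [0, 2−√3]; that is, there exists exactly one x ∈ [0, 2−√3] such that L ∼ M(x). -/
noncomputable section

/-- A full-rank lattice in `ℝⁿ`: the `ℤ`-span of an `ℝ`-basis of `ℝⁿ`. -/
def IsFullLattice (n : ℕ) (L : Submodule ℤ (EuclideanSpace ℝ (Fin n))) : Prop :=
  ∃ b : Module.Basis (Fin n) ℝ (EuclideanSpace ℝ (Fin n)), L = Submodule.span ℤ (Set.range b)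

/-- The minimum of a lattice: the least norm of a nonzero lattice vector. -/
def latticeMin (n : ℕ) (L : Submodule ℤ (EuclideanSpace ℝ (Fin n))) : ℝ :=
  sInf {r : ℝ | ∃ x ∈ L, x ≠ 0 ∧ ‖x‖ = r}

/-- The set of minimal vectors of the lattice `L`. -/
def minVecs (n : ℕ) (L : Submodule ℤ (EuclideanSpace ℝ (Fin n))) :
    Set (EuclideanSpace ℝ (Fin n)) :=
  {x | x ∈ L ∧ ‖x‖ = latticeMin n L}

/-- A lattice is well-rounded if its minimal vectors span `ℝⁿ` over `ℝ`. -/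
def IsWellRounded (n : ℕ) (L : Submodule ℤ (EuclideanSpace ℝ (Fin n))) : Prop :=
  Submodule.span ℝ (minVecs n L) = ⊤

/-- Similarity of lattices: `L₂ = α U L₁` for some `α > 0` and orthogonal `U`. -/
def SimilarLat (n : ℕ) (L₁ L₂ : Submodule ℤ (EuclideanSpace ℝ (Fin n))) : Prop :=
  ∃ α : ℝ, 0 < α ∧ ∃ U : EuclideanSpace ℝ (Fin n) ≃ₗᵢ[ℝ] EuclideanSpace ℝ (Fin n),
    (L₂ : Set (EuclideanSpace ℝ (Fin n))) = (fun v => α • U v) '' (L₁ : Set (EuclideanSpace ℝ (Fin n)))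

/-- The cyclic lattice `M(x) = span_ℤ {(1,x), (x,1)}`. -/
def Mlat (x : ℝ) : Submodule ℤ (EuclideanSpace ℝ (Fin 2)) :=
  Submodule.span ℤ {(!₂[1, x] : EuclideanSpace ℝ (Fin 2)), (!₂[x, 1] : EuclideanSpace ℝ (Fin 2))}

/- ====================  auxiliary development  ==================== -/

set_option maxHeartbeats 1000000

open scoped RealInnerProductSpace Pointwise

/-! ### Pure arithmetic lemmas -/

lemma WRaux.icc_fact {x : ℝ} (hx : x ∈ Set.Icc (0:ℝ) (2 - Real.sqrt 3)) :
    0 ≤ x ∧ x^2 - 4*x + 1 ≥ 0 ∧ x < 1 := by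
  obtain ⟨h0, h1⟩ := hx
  have h3 : Real.sqrt 3 ^ 2 = 3 := Real.sq_sqrt (by norm_num)
  have h3' : (0:ℝ) ≤ Real.sqrt 3 := Real.sqrt_nonneg 3
  have h3'' : (1:ℝ) < Real.sqrt 3 := by nlinarith
  refine ⟨h0, by nlinarith, by nlinarith⟩

lemma WRaux.int_facts {a b : ℤ} (ha : a ≠ 0) (hb : b ≠ 0) :
    1 ≤ |a*b| ∧ |a*b| + 1 ≤ a^2 + b^2 := by
  have h1 : 1 ≤ |a| := Int.one_le_abs ha
  have h2 : 1 ≤ |b| := Int.one_le_abs hb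
  have h3 : |a*b| = |a| * |b| := abs_mul a b
  constructor
  · rw [h3]; nlinarith
  · rw [h3, ← sq_abs a, ← sq_abs b]; nlinarith [sq_nonneg (|a| - |b|)]

lemma WRaux.int_ge {a b : ℤ} (hab : ¬(a = 0 ∧ b = 0)) {x : ℝ} (h0 : 0 ≤ x)
    (h1 : x^2 - 4*x + 1 ≥ 0) :
    1 + x^2 ≤ ((a:ℝ)^2 + (b:ℝ)^2)*(1+x^2) + 4*x*((a:ℝ)*b) := by
  have hsq : (1:ℤ) ≤ a^2 + b^2 := by
    rcases eq_or_ne a 0 with rfl | ha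
    · have hb : b ≠ 0 := fun h => hab ⟨rfl, h⟩
      nlinarith [Int.one_le_abs hb, sq_abs b, abs_nonneg b]
    · nlinarith [sq_nonneg b, Int.one_le_abs ha, sq_abs a, abs_nonneg a]
  have hsqR : (1:ℝ) ≤ (a:ℝ)^2 + (b:ℝ)^2 := by exact_mod_cast hsq
  rcases le_or_gt 0 ((a:ℝ)*b) with hpos | hneg
  · nlinarith
  · have ha : a ≠ 0 := by rintro rfl; simp at hneg
    have hb : b ≠ 0 := by rintro rfl; simp at hneg
    obtain ⟨hc1, hc2⟩ := WRaux.int_facts ha hb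
    have hc1R : (1:ℝ) ≤ |(a:ℝ)*(b:ℝ)| := by exact_mod_cast hc1
    have hc2R : |(a:ℝ)*(b:ℝ)| + 1 ≤ (a:ℝ)^2 + (b:ℝ)^2 := by exact_mod_cast hc2
    have habs : |(a:ℝ)*(b:ℝ)| = -((a:ℝ)*b) := abs_of_neg hneg
    nlinarith [mul_nonneg (le_trans zero_le_one hc1R) h1.le]

lemma WRaux.aux_ones {A B : ℤ} (h1 : 1 ≤ A) (h2 : 1 ≤ B) (h : A^2+B^2 = A*B+1) :
    A = 1 ∧ B = 1 := by
  have hAB : 1 ≤ A*B := by nlinarith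
  have hd : (A-B)^2 = 1 - A*B := by ring_nf; linarith
  have hd0 : (0:ℤ) ≤ (A-B)^2 := sq_nonneg _
  have hab : A*B = 1 := by linarith
  have hAeqB : A = B := by nlinarith
  constructor <;> nlinarith

lemma WRaux.int_eq {a b : ℤ} (hab : ¬(a = 0 ∧ b = 0)) {x : ℝ} (h0 : 0 ≤ x)
    (h1 : x^2 - 4*x + 1 ≥ 0)
    (heq : ((a:ℝ)^2 + (b:ℝ)^2)*(1+x^2) + 4*x*((a:ℝ)*b) = 1 + x^2) :
    (a = 1 ∧ b = 0) ∨ (a = -1 ∧ b = 0) ∨ (a = 0 ∧ b = 1) ∨ (a = 0 ∧ b = -1) ∨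
      (x^2 - 4*x + 1 = 0 ∧ ((a = 1 ∧ b = -1) ∨ (a = -1 ∧ b = 1))) := by
  have hx1 : (0:ℝ) < 1 + x^2 := by positivity
  rcases le_or_gt 0 ((a:ℝ)*b) with hpos | hneg
  · have h3 : (a:ℝ)^2+(b:ℝ)^2 ≤ 1 := by nlinarith
    have h3' : a^2 + b^2 ≤ 1 := by exact_mod_cast h3
    have ha2 : a^2 ≤ 1 := by nlinarith [sq_nonneg b]
    have hb2 : b^2 ≤ 1 := by nlinarith [sq_nonneg a]
    have ha1 : -1 ≤ a := by nlinarith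
    have ha1' : a ≤ 1 := by nlinarith
    have hb1 : -1 ≤ b := by nlinarith
    have hb1' : b ≤ 1 := by nlinarith
    have h4 : (a = 1 ∧ b = 0) ∨ (a = -1 ∧ b = 0) ∨ (a = 0 ∧ b = 1) ∨ (a = 0 ∧ b = -1) := by
      interval_cases a <;> interval_cases b <;> simp_all
    tauto
  · have ha : a ≠ 0 := by rintro rfl; simp at hneg
    have hb : b ≠ 0 := by rintro rfl; simp at hneg
    obtain ⟨hc1, hc2⟩ := WRaux.int_facts ha hb
    have hc1R : (1:ℝ) ≤ |(a:ℝ)*(b:ℝ)| := by exact_mod_cast hc1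
    have hc2R : |(a:ℝ)*(b:ℝ)| + 1 ≤ (a:ℝ)^2 + (b:ℝ)^2 := by exact_mod_cast hc2
    have habs : |(a:ℝ)*(b:ℝ)| = -((a:ℝ)*b) := abs_of_neg hneg
    have key : (a:ℝ)^2 + (b:ℝ)^2 - |(a:ℝ)*(b:ℝ)| - 1 ≥ 0 := by linarith
    have key2 : 4*x - (1+x^2) ≤ 0 := by linarith
    have hsplit : ((a:ℝ)^2+(b:ℝ)^2 - |(a:ℝ)*(b:ℝ)| - 1)*(1+x^2)
        + |(a:ℝ)*(b:ℝ)| * ((1+x^2) - 4*x) = 0 := by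
      rw [habs]; ring_nf; ring_nf at heq; linarith
    have t1 : ((a:ℝ)^2+(b:ℝ)^2 - |(a:ℝ)*(b:ℝ)| - 1)*(1+x^2) ≥ 0 :=
      mul_nonneg key hx1.le
    have t2 : |(a:ℝ)*(b:ℝ)| * ((1+x^2) - 4*x) ≥ 0 :=
      mul_nonneg (abs_nonneg _) (by linarith)
    have e2 : |(a:ℝ)*(b:ℝ)| * ((1+x^2) - 4*x) = 0 := by linarith
    have e1 : ((a:ℝ)^2+(b:ℝ)^2 - |(a:ℝ)*(b:ℝ)| - 1)*(1+x^2) = 0 := by linarith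
    have hx4 : x^2 - 4*x + 1 = 0 := by
      rcases mul_eq_zero.1 e2 with h | h
      · linarith
      · linarith
    have hA : (a:ℝ)^2+(b:ℝ)^2 = |(a:ℝ)*(b:ℝ)| + 1 := by
      rcases mul_eq_zero.1 e1 with h | h
      · linarith
      · linarith
    have hAZ : a^2 + b^2 = |a*b| + 1 := by exact_mod_cast hA
    have h1a : 1 ≤ |a| := Int.one_le_abs ha
    have h1b : 1 ≤ |b| := Int.one_le_abs hb
    rw [abs_mul, ← sq_abs a, ← sq_abs b] at hAZ
    obtain ⟨haa, hbb⟩ := WRaux.aux_ones h1a h1b hAZ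
    have hnegZ : a*b < 0 := by exact_mod_cast hneg
    rcases (abs_eq (by norm_num : (0:ℤ) ≤ 1)).1 haa with ha1 | ha1 <;>
      rcases (abs_eq (by norm_num : (0:ℤ) ≤ 1)).1 hbb with hb1 | hb1 <;>
        subst ha1 <;> subst hb1
    · norm_num at hnegZ
    · exact Or.inr (Or.inr (Or.inr (Or.inr ⟨hx4, Or.inl ⟨rfl, rfl⟩⟩)))
    · exact Or.inr (Or.inr (Or.inr (Or.inr ⟨hx4, Or.inr ⟨rfl, rfl⟩⟩)))
    · norm_num at hnegZ

lemma WRaux.xparam {c : ℝ} (h0 : 0 ≤ c) (h1 : c ≤ 1/2) :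
    ∃ x : ℝ, x ∈ Set.Icc (0:ℝ) (2 - Real.sqrt 3) ∧ 2*x = c*(1+x^2) := by
  set s := Real.sqrt (1 - c^2) with hs
  have hc2 : c^2 ≤ 1 := by nlinarith
  have hs0 : 0 ≤ s := Real.sqrt_nonneg _
  have hs2 : s^2 = 1 - c^2 := Real.sq_sqrt (by linarith)
  have h3 : Real.sqrt 3 ^ 2 = 3 := Real.sq_sqrt (by norm_num)
  have h3' : (0:ℝ) ≤ Real.sqrt 3 := Real.sqrt_nonneg 3
  have hs34 : Real.sqrt 3 / 2 ≤ s := by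
    rw [hs, Real.le_sqrt (by positivity) (by nlinarith)]
    nlinarith
  have h1s : (0:ℝ) < 1 + s := by linarith
  have hden : (0:ℝ) < 1 + Real.sqrt 3 / 2 := by linarith
  refine ⟨c / (1 + s), ⟨by positivity, ?_⟩, ?_⟩
  · have step : c / (1 + s) ≤ (1/2) / (1 + Real.sqrt 3 / 2) := by
      rw [div_le_div_iff₀ h1s hden]
      nlinarith
    have heq : (1/2 : ℝ) / (1 + Real.sqrt 3 / 2) = 2 - Real.sqrt 3 := by
      rw [div_eq_iff (by linarith)]
      nlinarith
    linarith
  · field_simp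
    ring_nf
    linear_combination (-c) * hs2

lemma WRaux.bound_aux {p q m t : ℝ} (hpq : |p| ≤ 1/2) (hqq : |q| ≤ 1/2) (hip : 0 ≤ t)
    (hub : 2*t ≤ m^2) (hm0 : 0 < m) :
    (p^2+q^2)*m^2 + 2*(p*q)*t < m^2 := by
  have h1 : p * q ≤ |p| * |q| := by rw [← abs_mul]; exact le_abs_self _
  have h2 : |p| * |q| ≤ 1/4 := by
    calc |p| * |q| ≤ (1/2) * (1/2) := mul_le_mul hpq hqq (abs_nonneg q) (by norm_num)
      _ = 1/4 := by norm_num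
  have H1 : p*q*t ≤ |p| * |q| * t := mul_le_mul_of_nonneg_right h1 hip
  have H2 : |p| * |q| * t ≤ 1/4*t := mul_le_mul_of_nonneg_right h2 hip
  have H3 : (p^2+q^2)*m^2 ≤ 1/2*m^2 := by
    have h3 : p^2 ≤ 1/4 := by rw [← sq_abs]; nlinarith [abs_nonneg p]
    have h4 : q^2 ≤ 1/4 := by rw [← sq_abs]; nlinarith [abs_nonneg q]
    exact mul_le_mul_of_nonneg_right (by linarith) (sq_nonneg m)
  have H4 : (0:ℝ) < m^2 := by positivity
  nlinarith [H1, H2, H3, H4, hub, hip]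

/-! ### The vectors generating `Mlat` -/

def WRaux.uvec (x : ℝ) : EuclideanSpace ℝ (Fin 2) := !₂[1, x]
def WRaux.vvec (x : ℝ) : EuclideanSpace ℝ (Fin 2) := !₂[x, 1]

open WRaux

lemma WRaux.inner_comb (x s t s' t' : ℝ) :
    ⟪s • uvec x + t • vvec x, s' • uvec x + t' • vvec x⟫ =
      (s*s' + t*t')*(1+x^2) + 2*x*(s*t' + s'*t) := by
  simp [uvec, vvec, PiLp.inner_apply, RCLike.inner_apply, Fin.sum_univ_two]
  ring

lemma WRaux.norm_sq_comb (x s t : ℝ) :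
    ‖s • uvec x + t • vvec x‖^2 = (s^2+t^2)*(1+x^2) + 4*x*(s*t) := by
  rw [← real_inner_self_eq_norm_sq, inner_comb]; ring

lemma WRaux.mem_Mlat {x : ℝ} {w : EuclideanSpace ℝ (Fin 2)} :
    w ∈ Mlat x ↔ ∃ a b : ℤ, (a:ℝ) • uvec x + (b:ℝ) • vvec x = w := by
  rw [Mlat, Submodule.mem_span_pair]
  constructor
  · rintro ⟨a, b, rfl⟩; exact ⟨a, b, by rw [Int.cast_smul_eq_zsmul, Int.cast_smul_eq_zsmul]; rfl⟩
  · rintro ⟨a, b, rfl⟩; exact ⟨a, b, by rw [Int.cast_smul_eq_zsmul, Int.cast_smul_eq_zsmul]; rfl⟩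

lemma WRaux.Mlat_eq (x : ℝ) : Mlat x = Submodule.span ℤ {uvec x, vvec x} := rfl

lemma WRaux.uvec_mem (x : ℝ) : uvec x ∈ Mlat x :=
  mem_Mlat.2 ⟨1, 0, by simp⟩

lemma WRaux.vvec_mem (x : ℝ) : vvec x ∈ Mlat x :=
  mem_Mlat.2 ⟨0, 1, by simp⟩

lemma WRaux.norm_uvec (x : ℝ) : ‖uvec x‖ = Real.sqrt (1+x^2) := by
  have h : ‖uvec x‖^2 = 1+x^2 := by
    have := norm_sq_comb x 1 0
    simpa using this
  rw [← h, Real.sqrt_sq (norm_nonneg _)]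

lemma WRaux.norm_vvec (x : ℝ) : ‖vvec x‖ = Real.sqrt (1+x^2) := by
  have h : ‖vvec x‖^2 = 1+x^2 := by
    have := norm_sq_comb x 0 1
    simpa using this
  rw [← h, Real.sqrt_sq (norm_nonneg _)]

lemma WRaux.uvec_ne_zero (x : ℝ) : uvec x ≠ 0 := by
  intro h
  have : (uvec x) 0 = 0 := by rw [h]; rfl
  simp [uvec] at this

lemma WRaux.latticeMin_Mlat {x : ℝ} (hx : x ∈ Set.Icc (0:ℝ) (2 - Real.sqrt 3)) :
    latticeMin 2 (Mlat x) = Real.sqrt (1+x^2) := by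
  obtain ⟨h0, h1, -⟩ := icc_fact hx
  have hmem : Real.sqrt (1+x^2) ∈ {r : ℝ | ∃ w ∈ Mlat x, w ≠ 0 ∧ ‖w‖ = r} :=
    ⟨uvec x, uvec_mem x, uvec_ne_zero x, norm_uvec x⟩
  refine le_antisymm (csInf_le ⟨0, ?_⟩ hmem) (le_csInf ⟨_, hmem⟩ ?_)
  · rintro r ⟨w, -, -, rfl⟩; exact norm_nonneg w
  · rintro r ⟨w, hwL, hw0, rfl⟩
    obtain ⟨a, b, rfl⟩ := mem_Mlat.1 hwL
    have hab : ¬(a = 0 ∧ b = 0) := by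
      rintro ⟨rfl, rfl⟩; simp at hw0
    have hge := int_ge hab h0 h1
    have : 1 + x^2 ≤ ‖(a:ℝ) • uvec x + (b:ℝ) • vvec x‖^2 := by
      rw [norm_sq_comb]; nlinarith
    calc Real.sqrt (1+x^2) ≤ Real.sqrt (‖(a:ℝ) • uvec x + (b:ℝ) • vvec x‖^2) :=
          Real.sqrt_le_sqrt this
      _ = _ := Real.sqrt_sq (norm_nonneg _)

lemma WRaux.minVec_class {x : ℝ} (hx : x ∈ Set.Icc (0:ℝ) (2 - Real.sqrt 3))
    {w : EuclideanSpace ℝ (Fin 2)} (hw : w ∈ minVecs 2 (Mlat x)) :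
    ∃ s t : ℝ, w = s • uvec x + t • vvec x ∧
      ((s = 1 ∧ t = 0) ∨ (s = -1 ∧ t = 0) ∨ (s = 0 ∧ t = 1) ∨ (s = 0 ∧ t = -1) ∨
       (x^2 - 4*x + 1 = 0 ∧ ((s = 1 ∧ t = -1) ∨ (s = -1 ∧ t = 1)))) := by
  obtain ⟨h0, h1, -⟩ := icc_fact hx
  obtain ⟨hwL, hwn⟩ := hw
  rw [latticeMin_Mlat hx] at hwn
  obtain ⟨a, b, rfl⟩ := mem_Mlat.1 hwL
  have hab : ¬(a = 0 ∧ b = 0) := by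
    rintro ⟨rfl, rfl⟩
    simp at hwn
    have : (0:ℝ) < 1 + x^2 := by positivity
    nlinarith [Real.sq_sqrt this.le, Real.sqrt_nonneg (1+x^2)]
  have heq : ((a:ℝ)^2 + (b:ℝ)^2)*(1+x^2) + 4*x*((a:ℝ)*b) = 1 + x^2 := by
    have h2 : ‖(a:ℝ) • uvec x + (b:ℝ) • vvec x‖^2 = 1+x^2 := by
      rw [hwn, Real.sq_sqrt (by positivity)]
    rw [norm_sq_comb] at h2; nlinarith
  refine ⟨a, b, rfl, ?_⟩
  rcases int_eq hab h0 h1 heq with ⟨rfl,rfl⟩|⟨rfl,rfl⟩|⟨rfl,rfl⟩|⟨rfl,rfl⟩|⟨h4, ⟨rfl,rfl⟩|⟨rfl,rfl⟩⟩ <;>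
    norm_num <;> tauto

lemma WRaux.minVec_inner {x : ℝ} (hx : x ∈ Set.Icc (0:ℝ) (2 - Real.sqrt 3))
    {w₁ w₂ : EuclideanSpace ℝ (Fin 2)}
    (h₁ : w₁ ∈ minVecs 2 (Mlat x)) (h₂ : w₂ ∈ minVecs 2 (Mlat x)) :
    ⟪w₁, w₂⟫ = 2*x ∨ ⟪w₁, w₂⟫ = -(2*x) ∨ ⟪w₁, w₂⟫ = 1+x^2 ∨ ⟪w₁, w₂⟫ = -(1+x^2) := by
  obtain ⟨s₁, t₁, rfl, hc₁⟩ := minVec_class hx h₁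
  obtain ⟨s₂, t₂, rfl, hc₂⟩ := minVec_class hx h₂
  rw [inner_comb]
  rcases hc₁ with ⟨rfl,rfl⟩|⟨rfl,rfl⟩|⟨rfl,rfl⟩|⟨rfl,rfl⟩|⟨h4, ⟨rfl,rfl⟩|⟨rfl,rfl⟩⟩ <;>
    rcases hc₂ with ⟨rfl,rfl⟩|⟨rfl,rfl⟩|⟨rfl,rfl⟩|⟨rfl,rfl⟩|⟨h4', ⟨rfl,rfl⟩|⟨rfl,rfl⟩⟩ <;>
    first
      | (left; linear_combination)
      | (left; linear_combination h4)
      | (left; linear_combination h4')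
      | (left; linear_combination -h4)
      | (left; linear_combination -h4')
      | (right; left; linear_combination)
      | (right; left; linear_combination h4)
      | (right; left; linear_combination h4')
      | (right; left; linear_combination -h4)
      | (right; left; linear_combination -h4')
      | (right; right; left; linear_combination)
      | (right; right; left; linear_combination h4)
      | (right; right; left; linear_combination -h4)
      | (right; right; right; linear_combination)
      | (right; right; right; linear_combination h4)
      | (right; right; right; linear_combination -h4)

/-! ### Similarity transfers -/

lemma SimilarLat.symm {n : ℕ} {L₁ L₂ : Submodule ℤ (EuclideanSpace ℝ (Fin n))}
    (h : SimilarLat n L₁ L₂) : SimilarLat n L₂ L₁ := by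
  obtain ⟨α, hα, U, hU⟩ := h
  refine ⟨α⁻¹, by positivity, U.symm, ?_⟩
  rw [hU, ← Set.image_comp]
  symm
  have : ((fun v => α⁻¹ • U.symm v) ∘ fun v => α • U v) = id := by
    funext y
    simp [smul_smul, inv_mul_cancel₀ hα.ne']
  rw [this, Set.image_id]

lemma SimilarLat.trans {n : ℕ} {L₁ L₂ L₃ : Submodule ℤ (EuclideanSpace ℝ (Fin n))}
    (h : SimilarLat n L₁ L₂) (h' : SimilarLat n L₂ L₃) : SimilarLat n L₁ L₃ := by
  obtain ⟨α, hα, U, hU⟩ := h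
  obtain ⟨β, hβ, V, hV⟩ := h'
  refine ⟨β*α, by positivity, U.trans V, ?_⟩
  rw [hV, hU, ← Set.image_comp]
  congr 1
  funext z
  simp [smul_smul, LinearIsometryEquiv.map_smul]

lemma WRaux.latticeMin_similar {n : ℕ} {L₁ L₂ : Submodule ℤ (EuclideanSpace ℝ (Fin n))}
    {α : ℝ} (hα : 0 < α) (U : EuclideanSpace ℝ (Fin n) ≃ₗᵢ[ℝ] EuclideanSpace ℝ (Fin n))
    (hU : (L₂ : Set (EuclideanSpace ℝ (Fin n))) = (fun v => α • U v) '' (L₁ : Set _)) :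
    latticeMin n L₂ = α * latticeMin n L₁ := by
  have hset : {r : ℝ | ∃ w ∈ L₂, w ≠ 0 ∧ ‖w‖ = r}
      = α • {r : ℝ | ∃ w ∈ L₁, w ≠ 0 ∧ ‖w‖ = r} := by
    ext r
    simp only [Set.mem_setOf_eq, Set.mem_smul_set, smul_eq_mul]
    constructor
    · rintro ⟨w, hw, hw0, rfl⟩
      have : w ∈ (L₂ : Set (EuclideanSpace ℝ (Fin n))) := hw
      rw [hU] at this
      obtain ⟨z, hz, rfl⟩ := this
      have hz0 : z ≠ 0 := by
        rintro rfl; simp at hw0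
      refine ⟨‖z‖, ⟨z, hz, hz0, rfl⟩, ?_⟩
      rw [norm_smul, U.norm_map, Real.norm_eq_abs, abs_of_pos hα]
    · rintro ⟨s, ⟨z, hz, hz0, rfl⟩, rfl⟩
      refine ⟨α • U z, ?_, ?_, ?_⟩
      · have : α • U z ∈ (L₂ : Set (EuclideanSpace ℝ (Fin n))) := by
          rw [hU]; exact ⟨z, hz, rfl⟩
        exact this
      · simp only [ne_eq, smul_eq_zero, not_or]
        refine ⟨hα.ne', fun h => hz0 ?_⟩
        simpa using congrArg U.symm h
      · rw [norm_smul, U.norm_map, Real.norm_eq_abs, abs_of_pos hα]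
  rw [latticeMin, latticeMin, hset, Real.sInf_smul_of_nonneg hα.le, smul_eq_mul]

lemma WRaux.minVecs_similar {n : ℕ} {L₁ L₂ : Submodule ℤ (EuclideanSpace ℝ (Fin n))}
    {α : ℝ} (hα : 0 < α) (U : EuclideanSpace ℝ (Fin n) ≃ₗᵢ[ℝ] EuclideanSpace ℝ (Fin n))
    (hU : (L₂ : Set (EuclideanSpace ℝ (Fin n))) = (fun v => α • U v) '' (L₁ : Set _))
    {w : EuclideanSpace ℝ (Fin n)} (hw : w ∈ minVecs n L₁) :
    α • U w ∈ minVecs n L₂ := by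
  obtain ⟨hwL, hwn⟩ := hw
  constructor
  · have : α • U w ∈ (L₂ : Set (EuclideanSpace ℝ (Fin n))) := by
      rw [hU]; exact ⟨w, hwL, rfl⟩
    exact this
  · rw [norm_smul, U.norm_map, Real.norm_eq_abs, abs_of_pos hα, hwn,
      latticeMin_similar hα U hU]

/-! ### Uniqueness: similar `Mlat`s have equal parameters -/

lemma WRaux.Mlat_similar_inj {x y : ℝ} (hx : x ∈ Set.Icc (0:ℝ) (2 - Real.sqrt 3))
    (hy : y ∈ Set.Icc (0:ℝ) (2 - Real.sqrt 3))
    (h : SimilarLat 2 (Mlat x) (Mlat y)) : x = y := by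
  obtain ⟨hx0, -, hx1⟩ := icc_fact hx
  obtain ⟨hy0, -, hy1⟩ := icc_fact hy
  obtain ⟨α, hα, U, hU⟩ := h
  have hux : uvec x ∈ minVecs 2 (Mlat x) :=
    ⟨uvec_mem x, (norm_uvec x).trans (latticeMin_Mlat hx).symm⟩
  have hvx : vvec x ∈ minVecs 2 (Mlat x) :=
    ⟨vvec_mem x, (norm_vvec x).trans (latticeMin_Mlat hx).symm⟩
  have hu' := minVecs_similar hα U hU hux
  have hv' := minVecs_similar hα U hU hvx
  have hiuv : ⟪uvec x, vvec x⟫ = 2*x := by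
    have := inner_comb x 1 0 0 1
    simpa using this
  have hi : ⟪α • U (uvec x), α • U (vvec x)⟫ = α^2 * (2*x) := by
    rw [real_inner_smul_left, real_inner_smul_right,
      LinearIsometryEquiv.inner_map_map, hiuv]
    ring
  have hn : α^2 * (1+x^2) = 1 + y^2 := by
    have h1 : ‖α • U (uvec x)‖ = Real.sqrt (1+y^2) := hu'.2.trans (latticeMin_Mlat hy)
    have h2 : ‖α • U (uvec x)‖ = α * Real.sqrt (1+x^2) := by
      rw [norm_smul, U.norm_map, Real.norm_eq_abs, abs_of_pos hα, norm_uvec]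
    have h3 := h2.symm.trans h1
    have h4 := congrArg (·^2) h3
    simp only [mul_pow] at h4
    rw [Real.sq_sqrt (by positivity : (0:ℝ) ≤ 1+x^2),
      Real.sq_sqrt (by positivity : (0:ℝ) ≤ 1+y^2)] at h4
    exact h4
  have hα2 : (0:ℝ) < α^2 := by positivity
  rcases minVec_inner hy hu' hv' with hc | hc | hc | hc <;> rw [hi] at hc
  · -- α² 2x = 2y
    have hcomb : 2*x*(1+y^2) = 2*y*(1+x^2) := by
      linear_combination (-(2*x)) * hn + (1+x^2) * hc
    have h5 : (x - y) * (1 - x*y) = 0 := by linear_combination hcomb / 2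
    rcases mul_eq_zero.1 h5 with h6 | h6
    · linarith
    · have : x*y < 1 := by nlinarith
      linarith
  · -- α² 2x = -2y : forces x = y = 0
    have hxty : α^2 * (2*x) ≥ 0 := by positivity
    have hy0' : y = 0 := by linarith
    have hx0' : x = 0 := by
      by_contra h
      have hx' : 0 < x := lt_of_le_of_ne hx0 (Ne.symm h)
      nlinarith
    rw [hx0', hy0']
  · -- α² 2x = 1 + y² = α²(1+x²) : impossible
    have h7 : α^2 * (2*x) = α^2 * (1+x^2) := by rw [hc, ← hn]
    have h8 : 2*x = 1+x^2 := mul_left_cancel₀ (ne_of_gt hα2) h7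
    nlinarith [sq_nonneg (x-1)]
  · -- α² 2x = -(1+y²) < 0 : impossible
    have hxty : α^2 * (2*x) ≥ 0 := by positivity
    nlinarith

/-! ### Existence -/

lemma WRaux.exists_min_pair {L : Submodule ℤ (EuclideanSpace ℝ (Fin 2))}
    (hWR : IsWellRounded 2 L) :
    ∃ e f : EuclideanSpace ℝ (Fin 2), e ∈ minVecs 2 L ∧ f ∈ minVecs 2 L ∧
      LinearIndependent ℝ ![e, f] := by
  obtain ⟨b, hsub, hspan, hind⟩ := exists_linearIndependent ℝ (minVecs 2 L)
  rw [hWR] at hspan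
  have hspan' : Submodule.span ℝ (Set.range (Subtype.val : b → _)) = ⊤ := by
    rw [Subtype.range_coe]; exact hspan
  let B : Module.Basis b ℝ (EuclideanSpace ℝ (Fin 2)) := Module.Basis.mk hind (by rw [hspan'])
  have : Fintype b := FiniteDimensional.fintypeBasisIndex B
  have hcard : Fintype.card b = 2 := by
    have h1 := Module.finrank_eq_card_basis B
    rw [finrank_euclideanSpace_fin] at h1
    omega
  obtain ⟨i, j, hij⟩ := Fintype.exists_pair_of_one_lt_card (by rw [hcard]; omega)
  refine ⟨i.1, j.1, hsub i.2, hsub j.2, ?_⟩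
  have hg : Function.Injective (![i, j] : Fin 2 → b) := by
    intro a a' haa
    fin_cases a <;> fin_cases a' <;> simp_all
  have := hind.comp ![i, j] hg
  have heq : (Subtype.val ∘ ![i, j]) = ![i.1, j.1] := by
    funext k; fin_cases k <;> rfl
  rwa [heq] at this

lemma WRaux.exists_Mlat_aux (L : Submodule ℤ (EuclideanSpace ℝ (Fin 2)))
    (e f : EuclideanSpace ℝ (Fin 2)) (he : e ∈ minVecs 2 L) (hf : f ∈ minVecs 2 L)
    (hind : LinearIndependent ℝ ![e, f]) (hip : 0 ≤ ⟪e, f⟫) :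
    ∃ x ∈ Set.Icc (0:ℝ) (2 - Real.sqrt 3), SimilarLat 2 L (Mlat x) := by
  obtain ⟨heL, hen⟩ := he
  obtain ⟨hfL, hfn⟩ := hf
  set m := latticeMin 2 L with hm
  have he0 : e ≠ 0 := by
    have := hind.ne_zero 0
    simpa using this
  have hm0 : 0 < m := by rw [← hen]; exact norm_pos_iff.2 he0
  have hlb : ∀ w ∈ L, w ≠ 0 → m ≤ ‖w‖ := by
    intro w hw hw0
    exact csInf_le ⟨0, by rintro r ⟨z, -, -, rfl⟩; exact norm_nonneg z⟩ ⟨w, hw, hw0, rfl⟩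
  set t := ⟪e, f⟫ with ht
  have hef_ne : e - f ≠ 0 := by
    intro h
    have hfe : e = f := by rwa [sub_eq_zero] at h
    have h2 := Fintype.linearIndependent_iff.1 hind ![1, -1]
      (by simp [Fin.sum_univ_two, hfe]) 0
    norm_num at h2
  have hub : 2 * t ≤ m^2 := by
    have h1 : m ≤ ‖e - f‖ := hlb _ (sub_mem heL hfL) hef_ne
    have h2 : ‖e - f‖^2 = m^2 - 2*t + m^2 := by
      rw [norm_sub_sq_real, hen, hfn]; try ring
    nlinarith
  have hc0 : 0 ≤ t/m^2 := by positivity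
  have hc1 : t/m^2 ≤ 1/2 := by rw [div_le_iff₀ (by positivity)]; linarith
  obtain ⟨x, hxI, hxc⟩ := xparam hc0 hc1
  refine ⟨x, hxI, ?_⟩
  have hcard : Fintype.card (Fin 2) = Module.finrank ℝ (EuclideanSpace ℝ (Fin 2)) := by
    simp [finrank_euclideanSpace_fin]
  let B := basisOfLinearIndependentOfCardEqFinrank hind hcard
  have hB : ⇑B = ![e, f] := coe_basisOfLinearIndependentOfCardEqFinrank hind hcard
  have hrep : ∀ w, w = B.repr w 0 • e + B.repr w 1 • f := by
    intro w
    conv_lhs => rw [← B.sum_repr w]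
    rw [Fin.sum_univ_two, hB]
    try simp
  have hLspan : L = Submodule.span ℤ {e, f} := by
    apply le_antisymm
    · intro w hw
      set s₁ := B.repr w 0
      set s₂ := B.repr w 1
      set a := round s₁
      set b := round s₂
      set p := s₁ - a with hp
      set q := s₂ - b with hq
      have hw' : w - ((a:ℤ) • e + (b:ℤ) • f) = p • e + q • f := by
        conv_lhs => rw [hrep w]
        rw [hp, hq, sub_smul, sub_smul, ← Int.cast_smul_eq_zsmul ℝ a,
          ← Int.cast_smul_eq_zsmul ℝ b]
        abel
      have hmem' : w - ((a:ℤ) • e + (b:ℤ) • f) ∈ L :=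
        sub_mem hw (add_mem (zsmul_mem heL a) (zsmul_mem hfL b))
      have hpq : |p| ≤ 1/2 := abs_sub_round s₁
      have hqq : |q| ≤ 1/2 := abs_sub_round s₂
      have hnorm : ‖p • e + q • f‖^2 = (p^2 + q^2)*m^2 + 2*(p*q)*t := by
        rw [norm_add_sq_real, norm_smul, norm_smul, real_inner_smul_left,
          real_inner_smul_right, hen, hfn, ← ht, Real.norm_eq_abs, Real.norm_eq_abs,
          mul_pow, mul_pow, sq_abs, sq_abs]
        ring
      have hlt : ‖p • e + q • f‖^2 < m^2 := by
        rw [hnorm]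
        exact bound_aux hpq hqq hip hub hm0
      have hzero : p • e + q • f = 0 := by
        by_contra hne
        have h5 : m ≤ ‖p • e + q • f‖ := by
          rw [← hw'] at hne ⊢
          exact hlb _ hmem' hne
        nlinarith [norm_nonneg (p • e + q • f)]
      have : w = (a:ℤ) • e + (b:ℤ) • f := by
        rw [← sub_eq_zero, hw', hzero]
      rw [this]
      exact Submodule.mem_span_pair.2 ⟨a, b, rfl⟩
    · rw [Submodule.span_le]
      rintro z (rfl | rfl)
      exacts [heL, hfL]
  have hx2 : (0:ℝ) < 1 + x^2 := by positivity
  obtain ⟨α, hα0, hα2⟩ : ∃ α : ℝ, 0 < α ∧ α^2 = (1 + x^2) / m^2 :=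
    ⟨Real.sqrt (1 + x^2) / m, div_pos (Real.sqrt_pos.2 hx2) hm0,
      by rw [div_pow, Real.sq_sqrt hx2.le]⟩
  have hA : α^2 * m^2 = 1 + x^2 := by
    rw [hα2]; field_simp
  have hBt : α^2 * t = 2*x := by
    rw [hα2, hxc]; field_simp
  have hee : ⟪e, e⟫ = m^2 := by rw [real_inner_self_eq_norm_sq, hen]
  have hff : ⟪f, f⟫ = m^2 := by rw [real_inner_self_eq_norm_sq, hfn]
  have hfe : ⟪f, e⟫ = t := real_inner_comm e f
  set T := B.constr ℝ ![uvec x, vvec x] with hT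
  have hTrep : ∀ w, T w = B.repr w 0 • uvec x + B.repr w 1 • vvec x := by
    intro w
    conv_lhs => rw [← B.sum_repr w]
    rw [map_sum, Fin.sum_univ_two]
    simp only [map_smul, hT, Module.Basis.constr_basis]
    norm_num
  have key : ∀ s₁ s₂ s₃ s₄ : ℝ,
      ⟪s₁ • uvec x + s₂ • vvec x, s₃ • uvec x + s₄ • vvec x⟫
        = α^2 * ⟪s₁ • e + s₂ • f, s₃ • e + s₄ • f⟫ := by
    intro s₁ s₂ s₃ s₄
    rw [inner_comb]
    rw [inner_add_left, inner_add_right, inner_add_right,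
      real_inner_smul_left, real_inner_smul_left, real_inner_smul_left,
      real_inner_smul_left, real_inner_smul_right, real_inner_smul_right,
      real_inner_smul_right, real_inner_smul_right, hee, hff, hfe, ← ht]
    linear_combination (-(s₁*s₃ + s₂*s₄)) * hA - (s₁*s₄ + s₂*s₃) * hBt
  have hinner : ∀ w w', ⟪T w, T w'⟫ = α^2 * ⟪w, w'⟫ := by
    intro w w'
    rw [hTrep w, hTrep w', key, ← hrep w, ← hrep w']
  set S : EuclideanSpace ℝ (Fin 2) →ₗ[ℝ] EuclideanSpace ℝ (Fin 2) := α⁻¹ • T with hS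
  have hSinner : ∀ w w', ⟪S w, S w'⟫ = ⟪w, w'⟫ := by
    intro w w'
    rw [hS]
    simp only [LinearMap.smul_apply]
    rw [real_inner_smul_left, real_inner_smul_right, hinner]
    field_simp
  let LI := S.isometryOfInner hSinner
  let U := LI.toLinearIsometryEquiv rfl
  have hU : ∀ w, U w = S w := fun w => rfl
  refine ⟨α, hα0, U, ?_⟩
  have hfun : (fun v => α • U v) = ⇑T := by
    funext w
    rw [hU, hS]
    simp only [LinearMap.smul_apply]
    rw [smul_smul, mul_inv_cancel₀ hα0.ne', one_smul]
  rw [hfun, hLspan]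
  have himg : Submodule.map (T.restrictScalars ℤ) (Submodule.span ℤ {e, f}) = Mlat x := by
    rw [Submodule.map_span, Mlat_eq]
    congr 1
    rw [Set.image_pair]
    have hTe : T e = uvec x := by
      have : e = B 0 := by rw [hB]; rfl
      rw [this, hT, Module.Basis.constr_basis]; rfl
    have hTf : T f = vvec x := by
      have : f = B 1 := by rw [hB]; rfl
      rw [this, hT, Module.Basis.constr_basis]; rfl
    simp [LinearMap.coe_restrictScalars, hTe, hTf]
  rw [← himg]
  rfl

lemma WRaux.exists_Mlat (L : Submodule ℤ (EuclideanSpace ℝ (Fin 2)))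
    (hWR : IsWellRounded 2 L) :
    ∃ x ∈ Set.Icc (0:ℝ) (2 - Real.sqrt 3), SimilarLat 2 L (Mlat x) := by
  obtain ⟨e, f, he, hf, hind⟩ := exists_min_pair hWR
  rcases le_or_gt 0 ⟪e, f⟫ with h | h
  · exact exists_Mlat_aux L e f he hf hind h
  · have hf' : -f ∈ minVecs 2 L := ⟨neg_mem hf.1, by rw [norm_neg]; exact hf.2⟩
    have hind' : LinearIndependent ℝ ![e, -f] := by
      have h1 := hind.units_smul ![1, -1]
      have h2 : ((![1, -1] : Fin 2 → ℝˣ) • ![e, f]) = ![e, -f] := by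
        funext i
        fin_cases i <;> simp [Units.smul_def]
      rwa [h2] at h1
    have hip' : 0 ≤ ⟪e, -f⟫ := by
      rw [inner_neg_right]
      linarith
    exact exists_Mlat_aux L e (-f) he hf' hind' hip'

/-- Every well-rounded full-rank lattice in the plane is similar to a unique `M(x)`
with `x ∈ [0, 2 - √3]`. -/
theorem wellRounded_similar_unique_Mlat
    (L : Submodule ℤ (EuclideanSpace ℝ (Fin 2)))
    (hL : IsFullLattice 2 L) (hWR : IsWellRounded 2 L) :
    ∃! x : ℝ, x ∈ Set.Icc (0 : ℝ) (2 - Real.sqrt 3) ∧ SimilarLat 2 L (Mlat x) := by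
  obtain ⟨x, hxI, hsim⟩ := WRaux.exists_Mlat L hWR
  refine ⟨x, ⟨hxI, hsim⟩, ?_⟩
  rintro y ⟨hyI, hsim'⟩
  exact WRaux.Mlat_similar_inj hyI hxI (hsim'.symm.trans hsim)

end
end

section
/- Let K be a number field of degree d, let K' be a finite extension of K which is a number field, let α ∈ K', let w : K' → ℂ be a field embedding, and let T ≥ 1 be a real number. Then the set S = { x ∈ K : |w(x)| ≤ |w(α)| and h(x) ≤ T } is finite with |S| ≤ (π/√12)·(1 + 4^{2(d+1)}·(T·h(α))^{2d}). -/
noncomputable section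

open NumberField
open scoped nonZeroDivisors Classical
set_option synthInstance.maxHeartbeats 1000000
set_option maxHeartbeats 2000000
set_option linter.unusedSectionVars false

/-- The denominator ideal of `x ∈ K`: the ideal of algebraic integers `a` such that
`a·x` is an algebraic integer. Its absolute norm equals the contribution
`∏_{v finite} max(1, |x|_v)^{d_v}` of the finite places to the Weil height. -/
def denomIdeal (K : Type*) [Field K] [NumberField K] (x : K) : Ideal (𝓞 K) where
  carrier := {a | ∃ b : 𝓞 K, algebraMap (𝓞 K) K a * x = algebraMap (𝓞 K) K b}
  add_mem' := by
    rintro a b ⟨p, hp⟩ ⟨q, hq⟩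
    exact ⟨p + q, by rw [map_add, map_add, add_mul, hp, hq]⟩
  zero_mem' := ⟨0, by simp⟩
  smul_mem' := by
    rintro c a ⟨p, hp⟩
    exact ⟨c * p, by rw [smul_eq_mul, map_mul, map_mul, mul_assoc, hp]⟩

/-- The absolute (multiplicative) Weil height of an element of a number field `K`:
`h(x)^{[K:ℚ]} = ∏_{v ∈ M(K)} max(1, |x|_v)^{d_v}`, where the contribution of the
finite places is the absolute norm of the denominator ideal of `x` and the infinite
places (with multiplicities `d_v`) are the `InfinitePlace`s. This is the absolute
height: it does not depend on the number field containing `x`. -/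
def weilHeight {K : Type*} [Field K] [NumberField K] (x : K) : ℝ :=
  ((Ideal.absNorm (denomIdeal K x) : ℝ) *
      ∏ v : InfinitePlace K, max 1 (v x) ^ v.mult) ^ ((Module.finrank ℚ K : ℝ)⁻¹)



section AuxCounting

variable {K : Type*} [Field K] [NumberField K]

lemma mem_denomIdeal {x : K} {a : 𝓞 K} :
    a ∈ denomIdeal K x ↔ ∃ b : 𝓞 K, algebraMap (𝓞 K) K a * x = algebraMap (𝓞 K) K b :=
  Iff.rfl

lemma denomIdeal_ne_bot (x : K) : denomIdeal K x ≠ ⊥ := by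
  obtain ⟨a, b, hb, hx⟩ := IsFractionRing.div_surjective (A := 𝓞 K) x
  have hb0 : b ≠ 0 := nonZeroDivisors.ne_zero hb
  have hbK : algebraMap (𝓞 K) K b ≠ 0 := by
    simpa using (map_ne_zero_iff _ (IsFractionRing.injective (𝓞 K) K)).mpr hb0
  have hmem : b ∈ denomIdeal K x := ⟨a, by rw [← hx, mul_comm, div_mul_cancel₀ _ hbK]⟩
  intro h
  rw [h] at hmem
  exact hb0 (by simpa using hmem)

lemma one_le_absNorm_denomIdeal (x : K) : 1 ≤ Ideal.absNorm (denomIdeal K x) :=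
  Nat.one_le_iff_ne_zero.mpr (fun h => denomIdeal_ne_bot x (Ideal.absNorm_eq_zero_iff.mp h))

lemma denomIdeal_mul_le_sub (x y : K) :
    denomIdeal K x * denomIdeal K y ≤ denomIdeal K (x - y) := by
  rw [Ideal.mul_le]
  rintro r ⟨a, ha⟩ s ⟨b, hb⟩
  refine ⟨s * a - r * b, ?_⟩
  have h0 : algebraMap (𝓞 K) K (r * s) * (x - y)
      = algebraMap (𝓞 K) K s * (algebraMap (𝓞 K) K r * x)
        - algebraMap (𝓞 K) K r * (algebraMap (𝓞 K) K s * y) := by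
    rw [map_mul]; ring
  rw [h0, ha, hb, map_sub, map_mul, map_mul]

lemma one_le_norm_mul_absNorm {z : K} (hz : z ≠ 0) :
    (1 : ℝ) ≤ |Algebra.norm ℚ z| * (Ideal.absNorm (denomIdeal K z) : ℝ) := by
  have main : (1 : ℚ) ≤ |Algebra.norm ℚ z| * (Ideal.absNorm (denomIdeal K z) : ℚ) := by
    set I : Ideal (𝓞 K) := denomIdeal K z
    set J : FractionalIdeal (𝓞 K)⁰ K :=
      FractionalIdeal.spanSingleton (𝓞 K)⁰ z * (I : FractionalIdeal (𝓞 K)⁰ K) with hJ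
    have hJ1 : J ≤ 1 := by
      rw [hJ, FractionalIdeal.mul_le]
      intro i hi j hj
      obtain ⟨c, rfl⟩ := (FractionalIdeal.mem_spanSingleton _).mp hi
      obtain ⟨b, hbI, rfl⟩ := (FractionalIdeal.mem_coeIdeal _).mp hj
      obtain ⟨b', hb'⟩ := (mem_denomIdeal (K := K)).mp hbI
      refine (FractionalIdeal.mem_one_iff _).mpr ⟨c * b', ?_⟩
      rw [map_mul, ← hb', Algebra.smul_def]
      ring
    obtain ⟨I₀, hI₀⟩ := FractionalIdeal.le_one_iff_exists_coeIdeal.mp hJ1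
    have hJ0 : J ≠ 0 := by
      apply mul_ne_zero
      · exact FractionalIdeal.spanSingleton_ne_zero_iff.mpr hz
      · rw [ne_eq, FractionalIdeal.coeIdeal_eq_zero]
        exact denomIdeal_ne_bot z
    have hI₀0 : I₀ ≠ ⊥ := by
      rintro rfl
      rw [← hI₀] at hJ0
      simp at hJ0
    have h1 : FractionalIdeal.absNorm J = |Algebra.norm ℚ z| * (Ideal.absNorm I : ℚ) := by
      rw [hJ, map_mul, FractionalIdeal.absNorm_span_singleton,
        FractionalIdeal.coeIdeal_absNorm]
    have h2 : FractionalIdeal.absNorm J = (Ideal.absNorm I₀ : ℚ) := by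
      rw [← hI₀, FractionalIdeal.coeIdeal_absNorm]
    have : 1 ≤ Ideal.absNorm I₀ :=
      Nat.one_le_iff_ne_zero.mpr (fun h => hI₀0 (Ideal.absNorm_eq_zero_iff.mp h))
    rw [← h1, h2]
    exact_mod_cast this
  calc (1:ℝ) = ((1:ℚ):ℝ) := by norm_num
  _ ≤ (((|Algebra.norm ℚ z| * (Ideal.absNorm (denomIdeal K z) : ℚ)) : ℚ) : ℝ) := by
        exact_mod_cast main
  _ = |Algebra.norm ℚ z| * (Ideal.absNorm (denomIdeal K z) : ℝ) := by push_cast; ring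


lemma place_nonneg (v : NumberField.InfinitePlace K) (t : K) : 0 ≤ v t := v.1.nonneg t

lemma place_sub_le (v : NumberField.InfinitePlace K) (x y : K) : v (x - y) ≤ v x + v y := by
  have h : ∀ t : K, v t = ‖v.embedding t‖ := by
    intro t
    conv_lhs => rw [← NumberField.InfinitePlace.mk_embedding v]
    rw [NumberField.InfinitePlace.apply]
  rw [h, h, h, map_sub]
  calc ‖v.embedding x - v.embedding y‖
      = ‖v.embedding x + -(v.embedding y)‖ := by ring_nf
    _ ≤ ‖v.embedding x‖ + ‖-(v.embedding y)‖ :=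
        norm_add_le _ _
    _ = ‖v.embedding x‖ + ‖v.embedding y‖ := by
        rw [norm_neg]

/-- the "mass" of `x` away from the place `v₀`. -/
def Qmass (v₀ : InfinitePlace K) (x : K) : ℝ :=
  (Ideal.absNorm (denomIdeal K x) : ℝ) *
    ∏ v ∈ Finset.univ.erase v₀, max 1 (v x) ^ v.mult

lemma one_le_absNorm_real (x : K) : (1:ℝ) ≤ (Ideal.absNorm (denomIdeal K x) : ℝ) := by
  exact_mod_cast one_le_absNorm_denomIdeal x

lemma one_le_prod_mval {s : Finset (InfinitePlace K)} (x : K) :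
    (1:ℝ) ≤ ∏ v ∈ s, max 1 (v x) ^ v.mult := by
  have h := Finset.prod_le_prod (s := s) (f := fun _ => (1:ℝ))
    (g := fun v => max 1 (v x) ^ v.mult) (fun _ _ => by norm_num)
    (fun v _ => one_le_pow₀ (le_max_left _ _))
  simpa using h

lemma one_le_Qmass (v₀ : InfinitePlace K) (x : K) : 1 ≤ Qmass v₀ x := by
  have := mul_le_mul (one_le_absNorm_real x) (one_le_prod_mval (s := Finset.univ.erase v₀) x)
    (by norm_num) (le_trans zero_le_one (one_le_absNorm_real x))
  simpa [Qmass] using this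

lemma Qmass_mul_eq (v₀ : InfinitePlace K) (x : K) :
    Qmass v₀ x * max 1 (v₀ x) ^ v₀.mult =
      (Ideal.absNorm (denomIdeal K x) : ℝ) *
        ∏ v : InfinitePlace K, max 1 (v x) ^ v.mult := by
  rw [Qmass, mul_assoc, Finset.prod_erase_mul Finset.univ _ (Finset.mem_univ v₀)]

lemma weilHeight_nonneg (x : K) : 0 ≤ weilHeight x :=
  Real.rpow_nonneg (le_trans zero_le_one (by
    have := mul_le_mul (one_le_absNorm_real x) (one_le_prod_mval (s := Finset.univ) x)
      (by norm_num) (le_trans zero_le_one (one_le_absNorm_real x))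
    simpa using this)) _

lemma one_le_heightPow (x : K) : (1:ℝ) ≤ (Ideal.absNorm (denomIdeal K x) : ℝ) *
    ∏ v : InfinitePlace K, max 1 (v x) ^ v.mult := by
  have := mul_le_mul (one_le_absNorm_real x) (one_le_prod_mval (s := Finset.univ) x)
    (by norm_num) (le_trans zero_le_one (one_le_absNorm_real x))
  simpa using this

lemma one_le_weilHeight (x : K) : 1 ≤ weilHeight x :=
  Real.one_le_rpow (one_le_heightPow x) (by positivity)

lemma Qmass_mul_le_of_height_le {v₀ : InfinitePlace K} {x : K} {T : ℝ}
    (hx : weilHeight x ≤ T) :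
    Qmass v₀ x * max 1 (v₀ x) ^ v₀.mult ≤ T ^ (Module.finrank ℚ K) := by
  rw [Qmass_mul_eq]
  have hA : (0:ℝ) ≤ (Ideal.absNorm (denomIdeal K x) : ℝ) *
      ∏ v : InfinitePlace K, max 1 (v x) ^ v.mult :=
    le_trans zero_le_one (one_le_heightPow x)
  have hd0 : Module.finrank ℚ K ≠ 0 := Module.finrank_pos.ne'
  have key : ((Ideal.absNorm (denomIdeal K x) : ℝ) *
      ∏ v : InfinitePlace K, max 1 (v x) ^ v.mult)
      = (weilHeight x) ^ (Module.finrank ℚ K) := by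
    rw [weilHeight]
    rw [Real.rpow_inv_natCast_pow hA hd0]
  rw [key]
  exact pow_le_pow_left₀ (weilHeight_nonneg x) hx _

lemma mult_le_finrank (v₀ : InfinitePlace K) : v₀.mult ≤ Module.finrank ℚ K := by
  rw [← NumberField.InfinitePlace.sum_mult_eq]
  exact Finset.single_le_sum (fun v _ => Nat.zero_le _) (Finset.mem_univ v₀)

lemma sum_mult_erase (v₀ : InfinitePlace K) :
    ∑ v ∈ Finset.univ.erase v₀, v.mult = Module.finrank ℚ K - v₀.mult := by
  have h : v₀.mult + ∑ v ∈ Finset.univ.erase v₀, v.mult = Module.finrank ℚ K := by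
    rw [Finset.add_sum_erase Finset.univ _ (Finset.mem_univ v₀),
      NumberField.InfinitePlace.sum_mult_eq]
  omega

lemma separation (v₀ : InfinitePlace K) {x y : K} (hxy : x ≠ y) :
    1 ≤ v₀ (x - y) ^ v₀.mult * 2 ^ (Module.finrank ℚ K - v₀.mult) *
      (Qmass v₀ x * Qmass v₀ y) := by
  have hz0 : x - y ≠ 0 := sub_ne_zero.mpr hxy
  have hDz : (Ideal.absNorm (denomIdeal K (x - y)) : ℝ) ≤
      (Ideal.absNorm (denomIdeal K x) : ℝ) * (Ideal.absNorm (denomIdeal K y) : ℝ) := by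
    have hdvd : Ideal.absNorm (denomIdeal K (x - y)) ∣
        Ideal.absNorm (denomIdeal K x) * Ideal.absNorm (denomIdeal K y) := by
      have h := Ideal.absNorm_dvd_absNorm_of_le (denomIdeal_mul_le_sub x y)
      rwa [_root_.map_mul Ideal.absNorm] at h
    have hpos : 0 < Ideal.absNorm (denomIdeal K x) * Ideal.absNorm (denomIdeal K y) :=
      Nat.mul_pos (one_le_absNorm_denomIdeal x) (one_le_absNorm_denomIdeal y)
    exact_mod_cast Nat.le_of_dvd hpos hdvd
  have hnorm : ((|Algebra.norm ℚ (x - y)| : ℚ) : ℝ) =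
      v₀ (x - y) ^ v₀.mult * ∏ v ∈ Finset.univ.erase v₀, v (x - y) ^ v.mult := by
    have h := NumberField.InfinitePlace.prod_eq_abs_norm (x - y)
    rw [← Finset.mul_prod_erase Finset.univ _ (Finset.mem_univ v₀)] at h
    rw [← h]
  have hprodle : ∏ v ∈ Finset.univ.erase v₀, v (x - y) ^ v.mult ≤
      2 ^ (Module.finrank ℚ K - v₀.mult) *
        ((∏ v ∈ Finset.univ.erase v₀, max 1 (v x) ^ v.mult) *
          (∏ v ∈ Finset.univ.erase v₀, max 1 (v y) ^ v.mult)) := by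
    have step : ∀ v : InfinitePlace K, v (x - y) ^ v.mult ≤
        (2 * (max 1 (v x) * max 1 (v y))) ^ v.mult := by
      intro v
      refine pow_le_pow_left₀ (place_nonneg v _) ?_ _
      have h1 : v (x - y) ≤ v x + v y := place_sub_le v x y
      have hx1 : v x ≤ max 1 (v x) := le_max_right _ _
      have hy1 : v y ≤ max 1 (v y) := le_max_right _ _
      have h2 : max 1 (v x) ≤ max 1 (v x) * max 1 (v y) :=
        le_mul_of_one_le_right (le_trans zero_le_one (le_max_left _ _)) (le_max_left _ _)
      have h3 : max 1 (v y) ≤ max 1 (v x) * max 1 (v y) :=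
        le_mul_of_one_le_left (le_trans zero_le_one (le_max_left _ _)) (le_max_left _ _)
      linarith
    calc ∏ v ∈ Finset.univ.erase v₀, v (x - y) ^ v.mult
        ≤ ∏ v ∈ Finset.univ.erase v₀, (2 * (max 1 (v x) * max 1 (v y))) ^ v.mult :=
          Finset.prod_le_prod (fun v _ => pow_nonneg (place_nonneg v _) _)
            (fun v _ => step v)
      _ = (∏ v ∈ Finset.univ.erase v₀, (2:ℝ) ^ v.mult) *
            ((∏ v ∈ Finset.univ.erase v₀, max 1 (v x) ^ v.mult) *
             (∏ v ∈ Finset.univ.erase v₀, max 1 (v y) ^ v.mult)) := by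
          simp_rw [mul_pow]
          rw [Finset.prod_mul_distrib, Finset.prod_mul_distrib]
      _ = 2 ^ (Module.finrank ℚ K - v₀.mult) *
            ((∏ v ∈ Finset.univ.erase v₀, max 1 (v x) ^ v.mult) *
             (∏ v ∈ Finset.univ.erase v₀, max 1 (v y) ^ v.mult)) := by
          rw [Finset.prod_pow_eq_pow_sum, sum_mult_erase]
  have habs : (1:ℝ) ≤ |Algebra.norm ℚ (x - y)| *
      (Ideal.absNorm (denomIdeal K (x - y)) : ℝ) := one_le_norm_mul_absNorm hz0
  calc (1:ℝ) ≤ ((|Algebra.norm ℚ (x - y)| : ℚ) : ℝ) *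
        (Ideal.absNorm (denomIdeal K (x - y)) : ℝ) := habs
    _ ≤ ((|Algebra.norm ℚ (x - y)| : ℚ) : ℝ) *
        ((Ideal.absNorm (denomIdeal K x) : ℝ) * (Ideal.absNorm (denomIdeal K y) : ℝ)) := by
        refine mul_le_mul_of_nonneg_left hDz ?_
        positivity
    _ = (v₀ (x - y) ^ v₀.mult * ∏ v ∈ Finset.univ.erase v₀, v (x - y) ^ v.mult) *
        ((Ideal.absNorm (denomIdeal K x) : ℝ) * (Ideal.absNorm (denomIdeal K y) : ℝ)) := by
        rw [hnorm]
    _ ≤ (v₀ (x - y) ^ v₀.mult * (2 ^ (Module.finrank ℚ K - v₀.mult) *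
          ((∏ v ∈ Finset.univ.erase v₀, max 1 (v x) ^ v.mult) *
           (∏ v ∈ Finset.univ.erase v₀, max 1 (v y) ^ v.mult)))) *
        ((Ideal.absNorm (denomIdeal K x) : ℝ) * (Ideal.absNorm (denomIdeal K y) : ℝ)) := by
        have h0 : (0:ℝ) ≤ v₀ (x - y) ^ v₀.mult := pow_nonneg (place_nonneg v₀ _) _
        have h1 : (0:ℝ) ≤ (Ideal.absNorm (denomIdeal K x) : ℝ) *
            (Ideal.absNorm (denomIdeal K y) : ℝ) := by positivity
        exact mul_le_mul_of_nonneg_right (mul_le_mul_of_nonneg_left hprodle h0) h1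
    _ = v₀ (x - y) ^ v₀.mult * 2 ^ (Module.finrank ℚ K - v₀.mult) *
        (Qmass v₀ x * Qmass v₀ y) := by
        rw [Qmass, Qmass]; ring


lemma place_eq_abs_embedding (v : NumberField.InfinitePlace K) (t : K) :
    v t = ‖v.embedding t‖ := by
  conv_lhs => rw [← NumberField.InfinitePlace.mk_embedding v]
  rw [NumberField.InfinitePlace.apply]

lemma abs_eq_abs_re_of_im_zero {z : ℂ} (h : z.im = 0) : ‖z‖ = |z.re| := by
  rw [Complex.norm_def, Complex.normSq_apply, h, mul_zero, add_zero, ← sq,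
    Real.sqrt_sq_eq_abs]

lemma abs_floor_diff_lt_one {a b : ℝ} (h : ⌊a⌋ = ⌊b⌋) : |a - b| < 1 := by
  rw [abs_sub_lt_iff]
  constructor
  · have h1 : a < ⌊a⌋ + 1 := Int.lt_floor_add_one a
    have h2 : (⌊b⌋ : ℝ) ≤ b := Int.floor_le b
    rw [h] at h1; linarith
  · have h1 : b < ⌊b⌋ + 1 := Int.lt_floor_add_one b
    have h2 : (⌊a⌋ : ℝ) ≤ a := Int.floor_le a
    rw [← h] at h1; linarith

theorem bounded_height_finite_card (K : Type*) [Field K] [NumberField K] (T : ℝ)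
    (hT : 1 ≤ T) :
    {x : K | weilHeight x ≤ T}.Finite ∧
    (({x : K | weilHeight x ≤ T}.ncard : ℝ) ≤
      (2 ^ (Module.finrank ℚ K + 6) + 12) * T ^ (2 * Module.finrank ℚ K)) := by
  classical
  set d := Module.finrank ℚ K with hd
  set S := {x : K | weilHeight x ≤ T} with hS
  have hd1 : 1 ≤ d := Module.finrank_pos
  set X : ℝ := T ^ d with hX
  have hX1 : 1 ≤ X := one_le_pow₀ hT
  have hX0 : 0 < X := lt_of_lt_of_le one_pos hX1
  obtain ⟨v₀⟩ : Nonempty (InfinitePlace K) := inferInstance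
  have hQ1 : ∀ x : K, 1 ≤ Qmass v₀ x := one_le_Qmass v₀
  have hQ0 : ∀ x : K, 0 ≤ Qmass v₀ x := fun x => le_trans zero_le_one (hQ1 x)
  set k : K → ℕ := fun x => Nat.log 2 ⌊Qmass v₀ x⌋₊ with hk
  set J : ℕ := Nat.log 2 ⌊X⌋₊ with hJ
  have hfloor1 : ∀ x : K, 1 ≤ ⌊Qmass v₀ x⌋₊ := fun x =>
    Nat.le_floor (by exact_mod_cast hQ1 x)
  have hc1 : ∀ x : K, (2:ℝ) ^ (k x) ≤ Qmass v₀ x := by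
    intro x
    calc ((2:ℝ)) ^ (k x) = ((2 ^ (k x) : ℕ) : ℝ) := by push_cast; ring
    _ ≤ (⌊Qmass v₀ x⌋₊ : ℝ) := by
        exact_mod_cast Nat.pow_log_le_self 2 (Nat.one_le_iff_ne_zero.mp (hfloor1 x))
    _ ≤ Qmass v₀ x := Nat.floor_le (hQ0 x)
  have hc2 : ∀ x : K, Qmass v₀ x < (2:ℝ) ^ (k x + 1) := by
    intro x
    calc Qmass v₀ x < ⌊Qmass v₀ x⌋₊ + 1 := Nat.lt_floor_add_one _
    _ ≤ ((2 ^ (k x + 1) : ℕ) : ℝ) := by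
        exact_mod_cast Nat.succ_le_of_lt (Nat.lt_pow_succ_log_self one_lt_two _)
    _ = (2:ℝ) ^ (k x + 1) := by push_cast; ring
  have hHpow : ∀ x ∈ S, Qmass v₀ x * max 1 (v₀ x) ^ v₀.mult ≤ X := fun x hx =>
    Qmass_mul_le_of_height_le hx
  have hQleX : ∀ x ∈ S, Qmass v₀ x ≤ X := by
    intro x hx
    have h1 : Qmass v₀ x * 1 ≤ Qmass v₀ x * max 1 (v₀ x) ^ v₀.mult :=
      mul_le_mul_of_nonneg_left (one_le_pow₀ (le_max_left _ _)) (hQ0 x)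
    rw [mul_one] at h1
    exact h1.trans (hHpow x hx)
  have hc3 : ∀ x ∈ S, k x ≤ J := fun x hx =>
    Nat.log_mono_right (Nat.floor_le_floor (hQleX x hx))
  have hc4 : ∀ x ∈ S, max 1 (v₀ x) ^ v₀.mult ≤ X / 2 ^ (k x) := by
    intro x hx
    rw [le_div_iff₀ (by positivity)]
    calc max 1 (v₀ x) ^ v₀.mult * 2 ^ (k x)
        ≤ max 1 (v₀ x) ^ v₀.mult * Qmass v₀ x :=
          mul_le_mul_of_nonneg_left (hc1 x) (by positivity)
    _ = Qmass v₀ x * max 1 (v₀ x) ^ v₀.mult := mul_comm _ _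
    _ ≤ X := hHpow x hx
  have h2J : (2:ℝ) ^ J ≤ X := by
    have hfl : 1 ≤ ⌊X⌋₊ := Nat.le_floor (by exact_mod_cast hX1)
    calc (2:ℝ) ^ J = ((2 ^ J : ℕ) : ℝ) := by push_cast; ring
    _ ≤ (⌊X⌋₊ : ℝ) := by
        exact_mod_cast Nat.pow_log_le_self 2 (Nat.one_le_iff_ne_zero.mp hfl)
    _ ≤ X := Nat.floor_le (le_of_lt hX0)
  have hJle : (J:ℝ) ≤ X := by
    calc (J:ℝ) ≤ ((2:ℝ)^J) := by
          exact_mod_cast le_trans (Nat.le_of_lt (Nat.lt_two_pow_self (n := J))) le_rfl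
    _ ≤ X := h2J
  have hQxy : ∀ x y : K, k x = k y → Qmass v₀ x * Qmass v₀ y < 2 ^ (2 * k x + 2) := by
    intro x y hkxy
    have h1 : Qmass v₀ x * Qmass v₀ y < 2 ^ (k x + 1) * 2 ^ (k y + 1) := by
      apply mul_lt_mul'' (hc2 x) (hc2 y) (hQ0 x) (hQ0 y)
    rw [← hkxy] at h1
    calc Qmass v₀ x * Qmass v₀ y < 2 ^ (k x + 1) * 2 ^ (k x + 1) := h1
    _ = 2 ^ (2 * k x + 2) := by rw [← pow_add]; congr 1; omega
  -- separation in convenient form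
  have hsep : ∀ x y : K, x ≠ y → k x = k y →
      ((2:ℝ) ^ (d - v₀.mult) * 2 ^ (2 * k x + 2))⁻¹ < v₀ (x - y) ^ v₀.mult := by
    intro x y hxy hkxy
    have hsep0 := separation v₀ hxy
    have hvpos : 0 < v₀ (x - y) := by
      rw [NumberField.InfinitePlace.pos_iff]
      exact sub_ne_zero.mpr hxy
    have hstep : v₀ (x - y) ^ v₀.mult * 2 ^ (d - v₀.mult) * (Qmass v₀ x * Qmass v₀ y)
        < v₀ (x - y) ^ v₀.mult * 2 ^ (d - v₀.mult) * 2 ^ (2 * k x + 2) := by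
      apply mul_lt_mul_of_pos_left (hQxy x y hkxy)
      positivity
    have h1 : (1:ℝ) < v₀ (x - y) ^ v₀.mult * 2 ^ (d - v₀.mult) * 2 ^ (2 * k x + 2) :=
      lt_of_le_of_lt hsep0 hstep
    rw [inv_lt_iff_one_lt_mul₀ (by positivity)]
    calc (1:ℝ) < v₀ (x - y) ^ v₀.mult * 2 ^ (d - v₀.mult) * 2 ^ (2 * k x + 2) := h1
    _ = v₀ (x - y) ^ v₀.mult * (2 ^ (d - v₀.mult) * 2 ^ (2 * k x + 2)) := by ring
  -- helper to finish once an injection into a finset is found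
  have finish_key : ∀ (Φ : K → ℕ × ℤ × ℤ) (F : Finset (ℕ × ℤ × ℤ)),
      (∀ x ∈ S, Φ x ∈ F) → Set.InjOn Φ S →
      S.Finite ∧ ((S.ncard : ℝ) ≤ (F.card : ℝ)) := by
    intro Φ F hmaps hinj
    have himg : Φ '' S ⊆ ↑F := by rintro _ ⟨x, hx, rfl⟩; exact hmaps x hx
    have hfin : S.Finite := Set.Finite.of_finite_image (F.finite_toSet.subset himg) hinj
    refine ⟨hfin, ?_⟩
    have h1 : S.ncard = (Φ '' S).ncard := (Set.ncard_image_of_injOn hinj).symm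
    have h2 : (Φ '' S).ncard ≤ F.card := by
      rw [← Set.ncard_coe_finset F]
      exact Set.ncard_le_ncard himg F.finite_toSet
    rw [h1]
    exact_mod_cast h2
  have hgeom : ∑ j ∈ Finset.range (J+1), (2:ℝ)^j ≤ 2 * X := by
    rw [geom_sum_eq (by norm_num : (2:ℝ) ≠ 1)]
    have : (2:ℝ)^(J+1) = 2 * 2^J := by rw [pow_succ]; ring
    rw [this]
    have h2X : 2 * (2:ℝ)^J ≤ 2 * X := by linarith [h2J]
    calc (2 * (2:ℝ)^J - 1)/(2 - 1) = 2 * (2:ℝ)^J - 1 := by norm_num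
    _ ≤ 2 * X := by linarith
  have hfinal : ∀ C : ℝ, (C ≤ (2^(d+6):ℝ) * X^2 + (4*X + 8)) →
      C ≤ (2 ^ (d + 6) + 12 : ℝ) * T ^ (2 * d) := by
    intro C hC
    have hXsq : X^2 = T^(2*d) := by rw [hX, ← pow_mul, mul_comm]
    have hX2: (1:ℝ) ≤ X^2 := one_le_pow₀ hX1
    calc C ≤ (2^(d+6):ℝ) * X^2 + (4*X + 8) := hC
    _ ≤ (2^(d+6) + 12 : ℝ) * X^2 := by nlinarith [hX2, hX1]
    _ = (2 ^ (d + 6) + 12 : ℝ) * T ^ (2*d) := by rw [hXsq]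
  by_cases hreal : v₀.IsReal
  · -- real place: 1-dimensional grid
    have hmu : v₀.mult = 1 := by
      rw [NumberField.InfinitePlace.mult, if_pos hreal]
    have hword : ComplexEmbedding.IsReal v₀.embedding :=
      NumberField.InfinitePlace.isReal_iff.mp hreal
    have him : ∀ t : K, (v₀.embedding t).im = 0 := by
      intro t
      have h := RingHom.congr_fun (NumberField.ComplexEmbedding.isReal_iff.mp hword) t
      rw [NumberField.ComplexEmbedding.conjugate_coe_eq] at h
      have := Complex.conj_eq_iff_im.mp h
      exact this
    have hval : ∀ t : K, v₀ t = |(v₀.embedding t).re| := fun t => by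
      rw [place_eq_abs_embedding, abs_eq_abs_re_of_im_zero (him t)]
    set s : ℕ → ℝ := fun j => ((2:ℝ)^(d + 2*j + 1))⁻¹ with hs
    have hspos : ∀ j, 0 < s j := fun j => by rw [hs]; positivity
    set B : ℕ → ℤ := fun j => ⌊(X / 2^j) / s j⌋ with hB
    have hBnn : ∀ j, 0 ≤ B j := fun j => Int.floor_nonneg.mpr (by positivity)
    set Φ : K → ℕ × ℤ × ℤ :=
      fun x => (k x, ⌊(v₀.embedding x).re / s (k x)⌋, 0) with hΦ
    set F : Finset (ℕ × ℤ × ℤ) := (Finset.range (J+1)).biUnion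
        (fun j => {j} ×ˢ (Finset.Icc (-(B j) - 1) (B j) ×ˢ Finset.Icc 0 0)) with hF
    have hradius : ∀ x ∈ S, |(v₀.embedding x).re| ≤ (X / 2^(k x)) := by
      intro x hx
      rw [← hval]
      calc v₀ x ≤ max 1 (v₀ x) := le_max_right _ _
      _ = max 1 (v₀ x) ^ v₀.mult := by rw [hmu, pow_one]
      _ ≤ X / 2^(k x) := hc4 x hx
    have hmaps : ∀ x ∈ S, Φ x ∈ F := by
      intro x hx
      rw [hF, Finset.mem_biUnion]
      refine ⟨k x, Finset.mem_range.mpr (Nat.lt_succ_of_le (hc3 x hx)), ?_⟩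
      rw [Finset.mem_product, Finset.mem_product]
      refine ⟨Finset.mem_singleton_self _, ?_, Finset.mem_Icc.mpr ⟨le_refl 0, le_refl 0⟩⟩
      rw [Finset.mem_Icc]
      have habs := abs_le.mp (hradius x hx)
      constructor
      · apply Int.le_floor.mpr
        have h1 : (X / 2^(k x)) / s (k x) < (B (k x) : ℝ) + 1 := Int.lt_floor_add_one _
        have h2 : -((X / 2^(k x)) / s (k x)) ≤ (v₀.embedding x).re / s (k x) := by
          rw [← neg_div]
          exact (div_le_div_iff_of_pos_right (hspos (k x))).mpr habs.1
        push_cast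
        linarith
      · apply Int.floor_le_floor
        exact (div_le_div_iff_of_pos_right (hspos (k x))).mpr habs.2
    have hinj : Set.InjOn Φ S := by
      intro x hx y hy hΦxy
      by_contra hxy
      have hkxy : k x = k y := congrArg Prod.fst hΦxy
      have hfl : ⌊(v₀.embedding x).re / s (k x)⌋ = ⌊(v₀.embedding y).re / s (k y)⌋ :=
        congrArg (fun p : ℕ × ℤ × ℤ => p.2.1) hΦxy
      rw [← hkxy] at hfl
      have hd1' : |(v₀.embedding x).re / s (k x) - (v₀.embedding y).re / s (k x)| < 1 :=
        abs_floor_diff_lt_one hfl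
      have hdiff : |(v₀.embedding x).re - (v₀.embedding y).re| < s (k x) := by
        have h0 : (v₀.embedding x).re - (v₀.embedding y).re
            = s (k x) * ((v₀.embedding x).re / s (k x) - (v₀.embedding y).re / s (k x)) := by
          field_simp [(hspos (k x)).ne']
        rw [h0, abs_mul, abs_of_pos (hspos (k x))]
        calc s (k x) * |(v₀.embedding x).re / s (k x) - (v₀.embedding y).re / s (k x)|
            < s (k x) * 1 := by
              exact mul_lt_mul_of_pos_left hd1' (hspos (k x))
        _ = s (k x) := mul_one _
      have hvlt : v₀ (x - y) ^ v₀.mult < s (k x) := by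
        rw [hmu, pow_one, hval, map_sub, Complex.sub_re]
        exact hdiff
      have hsep' := hsep x y hxy hkxy
      have heq : ((2:ℝ) ^ (d - v₀.mult) * 2 ^ (2 * k x + 2))⁻¹ = s (k x) := by
        have hexp : d - v₀.mult + (2 * k x + 2) = d + 2 * k x + 1 := by
          rw [hmu]; omega
        rw [hs, ← pow_add, hexp]
      rw [heq] at hsep'
      exact absurd (hsep'.trans hvlt) (lt_irrefl _)
    obtain ⟨hfin, hcount⟩ := finish_key Φ F hmaps hinj
    refine ⟨hfin, hcount.trans (hfinal _ ?_)⟩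
    -- cardinality of F
    have hcard1 : (F.card : ℝ) ≤
        ∑ j ∈ Finset.range (J+1), (2 * ((X / 2^j) / s j) + 2) := by
      have h1 : F.card ≤ ∑ j ∈ Finset.range (J+1),
          (({j} ×ˢ (Finset.Icc (-(B j) - 1) (B j) ×ˢ Finset.Icc (0:ℤ) 0)).card) :=
        Finset.card_biUnion_le
      have h2 : ∀ j, (({j} ×ˢ (Finset.Icc (-(B j) - 1) (B j) ×ˢ Finset.Icc (0:ℤ)  0)).card : ℝ)
          ≤ 2 * ((X / 2^j) / s j) + 2 := by
        intro j
        rw [Finset.card_product, Finset.card_product, Finset.card_singleton, Int.card_Icc,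
          Int.card_Icc]
        have hnn : (0:ℤ) ≤ B j + 1 - (-(B j) - 1) := by have := hBnn j; omega
        have h4 : ((B j : ℤ) : ℝ) ≤ (X / 2^j) / s j := Int.floor_le _
        have h5 : (((B j + 1 - (-(B j) - 1)).toNat : ℕ) : ℝ) = 2 * ((B j : ℤ) : ℝ) + 2 := by
          rw [show (((B j + 1 - (-(B j) - 1)).toNat : ℕ) : ℝ)
              = (((B j + 1 - (-(B j) - 1)).toNat : ℤ) : ℝ) by push_cast; ring,
            Int.toNat_of_nonneg hnn]
          push_cast; ring
        have h6 : ((0:ℤ) + 1 - 0).toNat = 1 := by norm_num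
        rw [h6]
        push_cast [h5]
        linarith
      calc (F.card : ℝ) ≤ (∑ j ∈ Finset.range (J+1),
          (({j} ×ˢ (Finset.Icc (-(B j) - 1) (B j) ×ˢ Finset.Icc (0:ℤ) 0)).card) : ℕ) := by
            exact_mod_cast h1
      _ = ∑ j ∈ Finset.range (J+1),
          ((({j} ×ˢ (Finset.Icc (-(B j) - 1) (B j) ×ˢ Finset.Icc (0:ℤ) 0)).card : ℝ)) := by
            push_cast; ring
      _ ≤ ∑ j ∈ Finset.range (J+1), (2 * ((X / 2^j) / s j) + 2) :=
            Finset.sum_le_sum (fun j _ => h2 j)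
    refine hcard1.trans ?_
    have hratio : ∀ j : ℕ, (X / 2^j) / s j = X * 2^(d+j+1) := by
      intro j
      rw [hs]
      simp only
      rw [div_eq_mul_inv, inv_inv]
      have hsplit : (2:ℝ)^(d + 2*j + 1) = 2^(d+j+1) * 2^j := by
        rw [← pow_add]; congr 1; omega
      rw [hsplit]
      have h2j : (2:ℝ)^j ≠ 0 := by positivity
      field_simp
    calc ∑ j ∈ Finset.range (J+1), (2 * ((X / 2^j) / s j) + 2)
        = ∑ j ∈ Finset.range (J+1), ((2^(d+2) * X) * 2^j + 2) := by
          apply Finset.sum_congr rfl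
          intro j _
          rw [hratio j]
          have hsplit : (2:ℝ)^(d+j+1) = 2^(d+1) * 2^j := by
            rw [← pow_add]; congr 1; omega
          rw [hsplit, pow_succ, pow_succ]
          ring
      _ = (2^(d+2) * X) * (∑ j ∈ Finset.range (J+1), (2:ℝ)^j) + (J+1) * 2 := by
          rw [Finset.sum_add_distrib, Finset.sum_const, Finset.card_range, ← Finset.mul_sum]
          simp [nsmul_eq_mul]
      _ ≤ (2^(d+2) * X) * (2 * X) + (J+1) * 2 := by
          have hnn : (0:ℝ) ≤ 2^(d+2) * X := by positivity
          have := mul_le_mul_of_nonneg_left hgeom hnn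
          push_cast
          nlinarith [hJle]
      _ ≤ (2^(d+6):ℝ) * X^2 + (4*X + 8) := by
          have h1 : (2^(d+2) * X) * (2 * X) = 2^(d+3) * X^2 := by
            rw [pow_succ]; ring
          rw [h1]
          have h2 : ((J:ℝ)+1) * 2 ≤ 2*X + 2 := by nlinarith [hJle]
          have h3 : (2^(d+3):ℝ) * X^2 ≤ 2^(d+6) * X^2 := by
            have : (2^(d+3):ℝ) ≤ 2^(d+6) := pow_le_pow_right₀ (by norm_num) (by omega)
            nlinarith [sq_nonneg X]
          push_cast
          linarith
  · -- complex place: 2-dimensional grid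
    have hmu : v₀.mult = 2 := by
      rw [NumberField.InfinitePlace.mult, if_neg hreal]
    have h2d : 2 ≤ d := by
      have := mult_le_finrank v₀
      omega
    set s : ℕ → ℝ := fun j => Real.sqrt (((2:ℝ)^(d + 2*j + 1))⁻¹) with hs
    have hspos : ∀ j, 0 < s j := fun j => Real.sqrt_pos.mpr (by positivity)
    have hssq : ∀ j, s j ^ 2 = ((2:ℝ)^(d + 2*j + 1))⁻¹ := fun j =>
      Real.sq_sqrt (by positivity)
    set R : ℕ → ℝ := fun j => Real.sqrt (X / 2^j) with hR
    have hRnn : ∀ j, 0 ≤ R j := fun j => Real.sqrt_nonneg _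
    set B : ℕ → ℤ := fun j => ⌊R j / s j⌋ with hB
    have hBnn : ∀ j, 0 ≤ B j := fun j =>
      Int.floor_nonneg.mpr (div_nonneg (hRnn j) (le_of_lt (hspos j)))
    set Φ : K → ℕ × ℤ × ℤ :=
      fun x => (k x, ⌊(v₀.embedding x).re / s (k x)⌋, ⌊(v₀.embedding x).im / s (k x)⌋) with hΦ
    set F : Finset (ℕ × ℤ × ℤ) := (Finset.range (J+1)).biUnion
        (fun j => {j} ×ˢ (Finset.Icc (-(B j) - 1) (B j) ×ˢ Finset.Icc (-(B j) - 1) (B j)))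
        with hF
    have hradius : ∀ x ∈ S, v₀ x ≤ R (k x) := by
      intro x hx
      apply Real.le_sqrt_of_sq_le
      calc v₀ x ^ 2 ≤ max 1 (v₀ x) ^ 2 :=
            pow_le_pow_left₀ (place_nonneg v₀ x) (le_max_right _ _) 2
      _ = max 1 (v₀ x) ^ v₀.mult := by rw [hmu]
      _ ≤ X / 2^(k x) := hc4 x hx
    have hradre : ∀ x ∈ S, |(v₀.embedding x).re| ≤ R (k x) := by
      intro x hx
      calc |(v₀.embedding x).re| ≤ ‖v₀.embedding x‖ := Complex.abs_re_le_norm _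
      _ = v₀ x := (place_eq_abs_embedding v₀ x).symm
      _ ≤ R (k x) := hradius x hx
    have hradim : ∀ x ∈ S, |(v₀.embedding x).im| ≤ R (k x) := by
      intro x hx
      calc |(v₀.embedding x).im| ≤ ‖v₀.embedding x‖ := Complex.abs_im_le_norm _
      _ = v₀ x := (place_eq_abs_embedding v₀ x).symm
      _ ≤ R (k x) := hradius x hx
    have hIccmem : ∀ (t : ℝ), ∀ j : ℕ, |t| ≤ R j →
        ⌊t / s j⌋ ∈ Finset.Icc (-(B j) - 1) (B j) := by
      intro t j ht
      have habs := abs_le.mp ht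
      rw [Finset.mem_Icc]
      constructor
      · apply Int.le_floor.mpr
        have h1 : R j / s j < (B j : ℝ) + 1 := Int.lt_floor_add_one _
        have h2 : -(R j / s j) ≤ t / s j := by
          rw [← neg_div]
          exact (div_le_div_iff_of_pos_right (hspos j)).mpr habs.1
        push_cast
        linarith
      · apply Int.floor_le_floor
        exact (div_le_div_iff_of_pos_right (hspos j)).mpr habs.2
    have hmaps : ∀ x ∈ S, Φ x ∈ F := by
      intro x hx
      rw [hF, Finset.mem_biUnion]
      refine ⟨k x, Finset.mem_range.mpr (Nat.lt_succ_of_le (hc3 x hx)), ?_⟩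
      rw [Finset.mem_product, Finset.mem_product]
      exact ⟨Finset.mem_singleton_self _, hIccmem _ _ (hradre x hx),
        hIccmem _ _ (hradim x hx)⟩
    have hinj : Set.InjOn Φ S := by
      intro x hx y hy hΦxy
      by_contra hxy
      have hkxy : k x = k y := congrArg Prod.fst hΦxy
      have hflre : ⌊(v₀.embedding x).re / s (k x)⌋ = ⌊(v₀.embedding y).re / s (k y)⌋ :=
        congrArg (fun p : ℕ × ℤ × ℤ => p.2.1) hΦxy
      have hflim : ⌊(v₀.embedding x).im / s (k x)⌋ = ⌊(v₀.embedding y).im / s (k y)⌋ :=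
        congrArg (fun p : ℕ × ℤ × ℤ => p.2.2) hΦxy
      rw [← hkxy] at hflre hflim
      have hkey : ∀ t u : ℝ, ⌊t / s (k x)⌋ = ⌊u / s (k x)⌋ → |t - u| < s (k x) := by
        intro t u hfl
        have hd1' : |t / s (k x) - u / s (k x)| < 1 := abs_floor_diff_lt_one hfl
        have h0 : t - u = s (k x) * (t / s (k x) - u / s (k x)) := by field_simp [(hspos (k x)).ne']
        rw [h0, abs_mul, abs_of_pos (hspos (k x))]
        calc s (k x) * |t / s (k x) - u / s (k x)| < s (k x) * 1 :=
              mul_lt_mul_of_pos_left hd1' (hspos (k x))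
        _ = s (k x) := mul_one _
      have hdre := hkey _ _ hflre
      have hdim := hkey _ _ hflim
      have hvsq : v₀ (x - y) ^ 2 < 2 * s (k x) ^ 2 := by
        rw [place_eq_abs_embedding, Complex.sq_norm, Complex.normSq_apply, map_sub,
          Complex.sub_re, Complex.sub_im]
        have h1 : ((v₀.embedding x).re - (v₀.embedding y).re) *
            ((v₀.embedding x).re - (v₀.embedding y).re) < s (k x) ^ 2 := by
          nlinarith [abs_nonneg ((v₀.embedding x).re - (v₀.embedding y).re),
            abs_mul_abs_self ((v₀.embedding x).re - (v₀.embedding y).re), hdre,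
            hspos (k x)]
        have h2 : ((v₀.embedding x).im - (v₀.embedding y).im) *
            ((v₀.embedding x).im - (v₀.embedding y).im) < s (k x) ^ 2 := by
          nlinarith [abs_nonneg ((v₀.embedding x).im - (v₀.embedding y).im),
            abs_mul_abs_self ((v₀.embedding x).im - (v₀.embedding y).im), hdim,
            hspos (k x)]
        linarith
      have hsep' := hsep x y hxy hkxy
      have heq : 2 * s (k x) ^ 2 ≤ ((2:ℝ) ^ (d - v₀.mult) * 2 ^ (2 * k x + 2))⁻¹ := by
        rw [hssq, hmu]
        have e1 : (2:ℝ)^(d-2) * 2^(2*k x+2) = 2^(d + 2*k x) := by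
          rw [← pow_add]; congr 1; omega
        have e2 : (2:ℝ)^(d + 2*k x + 1) = 2^(d + 2*k x) * 2 := pow_succ 2 _
        rw [e1, e2]
        rw [mul_inv]
        have hpos : (0:ℝ) < 2^(d + 2*k x) := by positivity
        rw [mul_comm]
        rw [mul_assoc]
        norm_num
      have hfinallt : v₀ (x - y) ^ v₀.mult < v₀ (x - y) ^ v₀.mult := by
        calc v₀ (x - y) ^ v₀.mult = v₀ (x - y) ^ 2 := by rw [hmu]
        _ < 2 * s (k x) ^ 2 := hvsq
        _ ≤ ((2:ℝ) ^ (d - v₀.mult) * 2 ^ (2 * k x + 2))⁻¹ := heq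
        _ < v₀ (x - y) ^ v₀.mult := hsep'
      exact absurd hfinallt (lt_irrefl _)
    obtain ⟨hfin, hcount⟩ := finish_key Φ F hmaps hinj
    refine ⟨hfin, hcount.trans (hfinal _ ?_)⟩
    have hRS : ∀ j : ℕ, (R j / s j)^2 = X * 2^(d+j+1) := by
      intro j
      rw [div_pow, Real.sq_sqrt (by positivity : (0:ℝ) ≤ X / 2^j), hssq, div_eq_mul_inv,
        inv_inv]
      have hsplit : (2:ℝ)^(d + 2*j + 1) = 2^(d+j+1) * 2^j := by
        rw [← pow_add]; congr 1; omega
      rw [hsplit]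
      have h2j : (2:ℝ)^j ≠ 0 := by positivity
      field_simp
    have hRS1 : ∀ j : ℕ, 1 ≤ R j / s j := by
      intro j
      have h1 : (1:ℝ) ≤ (R j / s j)^2 := by
        rw [hRS j]
        have : (1:ℝ) ≤ 2^(d+j+1) := one_le_pow₀ (by norm_num)
        nlinarith [hX1]
      nlinarith [div_nonneg (hRnn j) (le_of_lt (hspos j))]
    have hcard1 : (F.card : ℝ) ≤
        ∑ j ∈ Finset.range (J+1), (12 * (X * 2^(d+j+1)) + 4) := by
      have h1 : F.card ≤ ∑ j ∈ Finset.range (J+1),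
          (({j} ×ˢ (Finset.Icc (-(B j) - 1) (B j) ×ˢ Finset.Icc (-(B j) - 1) (B j))).card) :=
        Finset.card_biUnion_le
      have h2 : ∀ j, ((({j} ×ˢ (Finset.Icc (-(B j) - 1) (B j) ×ˢ
          Finset.Icc (-(B j) - 1) (B j))).card : ℝ)) ≤ 12 * (X * 2^(d+j+1)) + 4 := by
        intro j
        rw [Finset.card_product, Finset.card_product, Finset.card_singleton, Int.card_Icc]
        have hnn : (0:ℤ) ≤ B j + 1 - (-(B j) - 1) := by have := hBnn j; omega
        have h4 : ((B j : ℤ) : ℝ) ≤ R j / s j := Int.floor_le _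
        have h5 : (((B j + 1 - (-(B j) - 1)).toNat : ℕ) : ℝ) = 2 * ((B j : ℤ) : ℝ) + 2 := by
          rw [show (((B j + 1 - (-(B j) - 1)).toNat : ℕ) : ℝ)
              = (((B j + 1 - (-(B j) - 1)).toNat : ℤ) : ℝ) by push_cast; ring,
            Int.toNat_of_nonneg hnn]
          push_cast; ring
        push_cast [h5]
        have hrs1 := hRS1 j
        have hrs := hRS j
        have hBle : (B j : ℝ) ≤ R j / s j := h4
        have hBnn' : (0:ℝ) ≤ (B j : ℝ) := by exact_mod_cast hBnn j
        -- (2B+2)^2 ≤ (2(R/s)+2)^2 ≤ 12 (R/s)^2 + 4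
        have hsq : (2 * (B j:ℝ) + 2) * (2 * (B j:ℝ) + 2) ≤ 12 * (R j / s j)^2 + 4 := by
          nlinarith [hrs1, hBle, hBnn']
        nlinarith [hsq, hrs]
      calc (F.card : ℝ) ≤ (∑ j ∈ Finset.range (J+1),
          (({j} ×ˢ (Finset.Icc (-(B j) - 1) (B j) ×ˢ
            Finset.Icc (-(B j) - 1) (B j))).card) : ℕ) := by exact_mod_cast h1
      _ = ∑ j ∈ Finset.range (J+1),
          ((({j} ×ˢ (Finset.Icc (-(B j) - 1) (B j) ×ˢ
            Finset.Icc (-(B j) - 1) (B j))).card : ℝ)) := by push_cast; ring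
      _ ≤ ∑ j ∈ Finset.range (J+1), (12 * (X * 2^(d+j+1)) + 4) :=
            Finset.sum_le_sum (fun j _ => h2 j)
    refine hcard1.trans ?_
    calc ∑ j ∈ Finset.range (J+1), (12 * (X * 2^(d+j+1)) + 4)
        = ∑ j ∈ Finset.range (J+1), ((12 * 2^(d+1) * X) * 2^j + 4) := by
          apply Finset.sum_congr rfl
          intro j _
          have hsplit : (2:ℝ)^(d+j+1) = 2^(d+1) * 2^j := by
            rw [← pow_add]; congr 1; omega
          rw [hsplit]
          ring
      _ = (12 * 2^(d+1) * X) * (∑ j ∈ Finset.range (J+1), (2:ℝ)^j) + (J+1) * 4 := by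
          rw [Finset.sum_add_distrib, Finset.sum_const, Finset.card_range, ← Finset.mul_sum]
          simp [nsmul_eq_mul]
      _ ≤ (12 * 2^(d+1) * X) * (2 * X) + (J+1) * 4 := by
          have hnn : (0:ℝ) ≤ 12 * 2^(d+1) * X := by positivity
          have := mul_le_mul_of_nonneg_left hgeom hnn
          push_cast
          nlinarith [hJle]
      _ ≤ (2^(d+6):ℝ) * X^2 + (4*X + 8) := by
          have h1 : (12 * 2^(d+1) * X) * (2 * X) = 24 * 2^(d+1) * X^2 := by ring
          rw [h1]
          have h2 : (24 * 2^(d+1) : ℝ) ≤ 2^(d+6) := by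
            have : (2:ℝ)^(d+6) = 32 * 2^(d+1) := by
              rw [show d+6 = (d+1)+5 by omega, pow_add]; ring
            rw [this]
            nlinarith [pow_pos (show (0:ℝ) < 2 by norm_num) (d+1)]
          have h3 : ((J:ℝ)+1) * 4 ≤ 4*X + 8 := by nlinarith [hJle]
          push_cast
          nlinarith [sq_nonneg X, h2, h3, one_le_pow₀ hX1 (n := 2)]



lemma constNat : ∀ n : ℕ, 2^(n+7)+12 ≤ 14*16^(n+1) := by
  intro n
  induction n with
  | zero => norm_num
  | succ m ih =>
    have h1 : 2^(m+1+7)+12 ≤ 2*(2^(m+7)+12) := by ring_nf; omega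
    have h2 : 2*(2^(m+7)+12) ≤ 2*(14*16^(m+1)) := by omega
    have h3 : 2*(14*16^(m+1)) ≤ 14*16^(m+1+1) := by
      calc 2*(14*16^(m+1)) = 28*16^(m+1) := by ring
      _ ≤ 224*16^(m+1) := Nat.mul_le_mul_right _ (by norm_num)
      _ = 14*16^(m+1+1) := by ring
    omega

end AuxCounting

/-- Loher–Masser type estimate: for a number field `K` of degree `d`, a finite
extension `K'` of `K`, `α ∈ K'`, an embedding `w : K' → ℂ` and `T ≥ 1`, the set
`S = {x ∈ K : |w(x)| ≤ |w(α)|, h(x) ≤ T}` is finite of cardinality at most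
`(π/√12)·(1 + 4^{2(d+1)}·(T·h(α))^{2d})`. -/
theorem card_le_of_bounded_height (K K' : Type*) [Field K] [NumberField K]
    [Field K'] [NumberField K'] [Algebra K K'] (α : K') (w : K' →+* ℂ)
    (T : ℝ) (hT : 1 ≤ T) :
    {x : K | ‖w (algebraMap K K' x)‖ ≤ ‖w α‖ ∧
        weilHeight x ≤ T}.Finite ∧
      (({x : K | ‖w (algebraMap K K' x)‖ ≤ ‖w α‖ ∧
          weilHeight x ≤ T}.ncard : ℝ) ≤
        Real.pi / Real.sqrt 12 *
          (1 + 4 ^ (2 * (Module.finrank ℚ K + 1)) *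
            (T * weilHeight α) ^ (2 * Module.finrank ℚ K))) := by
  classical
  set d := Module.finrank ℚ K with hd
  have hd1 : 1 ≤ d := Module.finrank_pos
  obtain ⟨hfin0, hcard0⟩ := bounded_height_finite_card K T hT
  have hsub : {x : K | ‖w (algebraMap K K' x)‖ ≤ ‖w α‖ ∧
      weilHeight x ≤ T} ⊆ {x : K | weilHeight x ≤ T} := fun x hx => hx.2
  have hfin : ({x : K | ‖w (algebraMap K K' x)‖ ≤ ‖w α‖ ∧
      weilHeight x ≤ T}).Finite := hfin0.subset hsub
  refine ⟨hfin, ?_⟩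
  have h1 : (({x : K | ‖w (algebraMap K K' x)‖ ≤ ‖w α‖ ∧
      weilHeight x ≤ T}).ncard : ℝ) ≤ (({x : K | weilHeight x ≤ T}).ncard : ℝ) := by
    exact_mod_cast Set.ncard_le_ncard hsub hfin0
  have hHa : 1 ≤ weilHeight α := one_le_weilHeight α
  have hT0 : (0:ℝ) ≤ T := le_trans zero_le_one hT
  have hTH : T ≤ T * weilHeight α := le_mul_of_one_le_right hT0 hHa
  have h2 : T ^ (2*d) ≤ (T * weilHeight α) ^ (2*d) := pow_le_pow_left₀ hT0 hTH _
  have hTd : (0:ℝ) ≤ T ^ (2*d) := by positivity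
  have hCd : ((2:ℝ)^(d+6) + 12) ≤ 14 * 16^d := by
    have hn := constNat (d-1)
    have he1 : d - 1 + 7 = d + 6 := by omega
    have he2 : d - 1 + 1 = d := by omega
    rw [he1, he2] at hn
    exact_mod_cast hn
  have hs12 : Real.sqrt 12 ≤ 3.47 := by
    calc Real.sqrt 12 ≤ Real.sqrt (3.47^2) := Real.sqrt_le_sqrt (by norm_num)
    _ = 3.47 := Real.sqrt_sq (by norm_num)
  have hpos12 : 0 < Real.sqrt 12 := Real.sqrt_pos.mpr (by norm_num)
  have hpi : (3.14 : ℝ) ≤ Real.pi := by linarith [Real.pi_gt_d2]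
  have hfrac : (14:ℝ) ≤ Real.pi / Real.sqrt 12 * 16 := by
    rw [div_mul_eq_mul_div, le_div_iff₀ hpos12]
    nlinarith [hs12, hpi]
  have hfracpos : 0 < Real.pi / Real.sqrt 12 := div_pos Real.pi_pos hpos12
  have h416 : (4:ℝ)^(2*(d+1)) = 16^(d+1) := by
    rw [pow_mul]; norm_num
  have h16d : (0:ℝ) < 16^d := by positivity
  calc (({x : K | ‖w (algebraMap K K' x)‖ ≤ ‖w α‖ ∧
      weilHeight x ≤ T}).ncard : ℝ)
      ≤ (({x : K | weilHeight x ≤ T}).ncard : ℝ) := h1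
  _ ≤ ((2:ℝ)^(d+6) + 12) * T^(2*d) := hcard0
  _ ≤ (14 * 16^d) * T^(2*d) := mul_le_mul_of_nonneg_right hCd hTd
  _ ≤ (Real.pi / Real.sqrt 12 * 16 * 16^d) * T^(2*d) := by
      have := mul_le_mul_of_nonneg_right (mul_le_mul_of_nonneg_right hfrac (le_of_lt h16d)) hTd
      calc (14 * 16^d) * T^(2*d) ≤ ((Real.pi / Real.sqrt 12 * 16) * 16^d) * T^(2*d) := this
      _ = (Real.pi / Real.sqrt 12 * 16 * 16^d) * T^(2*d) := by ring
  _ = Real.pi / Real.sqrt 12 * (16^(d+1) * T^(2*d)) := by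
      rw [pow_succ]; ring
  _ ≤ Real.pi / Real.sqrt 12 * (16^(d+1) * (T * weilHeight α)^(2*d)) := by
      apply mul_le_mul_of_nonneg_left ?_ (le_of_lt hfracpos)
      apply mul_le_mul_of_nonneg_left h2 (by positivity)
  _ ≤ Real.pi / Real.sqrt 12 * (1 + 4 ^ (2 * (d + 1)) * (T * weilHeight α) ^ (2 * d)) := by
      apply mul_le_mul_of_nonneg_left ?_ (le_of_lt hfracpos)
      rw [h416]
      linarith

end
end

section
/- Let K ⊂ ℝ be a real number field of degree d and let T ≥ 1 be a real number. Then the set { x ∈ K : 0 ≤ x ≤ 2−√3 and h(x) ≤ T } is finite with cardinality at most (π/(2√12))·(1 + 4^{2(d+1)}·(2+√3)^d·T^{2d}). (By the parameterization of planar well-rounded similarity classes by M(x), x ∈ [0, 2−√3], this set is in bijection with the similarity classes of well-rounded lattices defined over K of height at most T.) -/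
noncomputable section

open NumberField

namespace WRAux

open scoped nonZeroDivisors

variable {K : Type*} [Field K] [NumberField K]

lemma mem_denomIdeal {x : K} {a : 𝓞 K} :
    a ∈ denomIdeal K x ↔ ∃ b : 𝓞 K, algebraMap (𝓞 K) K a * x = algebraMap (𝓞 K) K b :=
  Iff.rfl

/-- Unnormalized height `h(x)^d`. -/
def hgt (x : K) : ℝ :=
  (Ideal.absNorm (denomIdeal K x) : ℝ) * ∏ v : InfinitePlace K, max 1 (v x) ^ v.mult

lemma denomIdeal_ne_bot (x : K) : denomIdeal K x ≠ ⊥ := by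
  obtain ⟨⟨p, s⟩, h⟩ := IsLocalization.surj (M := nonZeroDivisors (𝓞 K)) x
  intro hbot
  have hs : (s : 𝓞 K) ∈ denomIdeal K x := ⟨p, by rw [mul_comm]; exact h⟩
  rw [hbot, Ideal.mem_bot] at hs
  exact nonZeroDivisors.coe_ne_zero s hs

lemma one_le_absNorm_denom (x : K) : 1 ≤ (Ideal.absNorm (denomIdeal K x) : ℝ) := by
  have : Ideal.absNorm (denomIdeal K x) ≠ 0 := by
    rw [Ne, Ideal.absNorm_eq_zero_iff]
    exact denomIdeal_ne_bot x
  exact_mod_cast Nat.one_le_iff_ne_zero.mpr this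

lemma one_le_prodmax (x : K) : 1 ≤ ∏ v : InfinitePlace K, max 1 (v x) ^ v.mult := by
  calc (1:ℝ) = ∏ _v : InfinitePlace K, 1 := by simp
    _ ≤ ∏ v : InfinitePlace K, max 1 (v x) ^ v.mult :=
      Finset.prod_le_prod (fun _ _ => zero_le_one) (fun v _ => one_le_pow₀ (le_max_left 1 _))

lemma one_le_hgt (x : K) : 1 ≤ hgt x := by
  have h1 := one_le_absNorm_denom x
  have h2 := one_le_prodmax x
  unfold hgt
  nlinarith

lemma hgt_nonneg (x : K) : 0 ≤ hgt x := le_trans zero_le_one (one_le_hgt x)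

lemma weilHeight_eq (x : K) : weilHeight x = hgt x ^ ((Module.finrank ℚ K : ℝ)⁻¹) := rfl

lemma hgt_eq_pow (x : K) : hgt x = weilHeight x ^ (Module.finrank ℚ K) := by
  have hd : (Module.finrank ℚ K : ℝ) ≠ 0 :=
    Nat.cast_ne_zero.mpr (Module.finrank_pos (R := ℚ) (M := K)).ne'
  rw [weilHeight_eq, ← Real.rpow_natCast (hgt x ^ ((Module.finrank ℚ K : ℝ)⁻¹)),
    ← Real.rpow_mul (hgt_nonneg x), inv_mul_cancel₀ hd, Real.rpow_one]

lemma weilHeight_nonneg (x : K) : 0 ≤ weilHeight x :=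
  Real.rpow_nonneg (hgt_nonneg x) _

lemma hgt_le_of_height_le {x : K} {T : ℝ} (h : weilHeight x ≤ T) :
    hgt x ≤ T ^ (Module.finrank ℚ K) := by
  rw [hgt_eq_pow]
  exact pow_le_pow_left₀ (weilHeight_nonneg x) h _

lemma denom_mul_le (x y : K) :
    denomIdeal K x * denomIdeal K y ≤ denomIdeal K (x - y) := by
  rw [Ideal.mul_le]
  rintro a ⟨p, hp⟩ b ⟨q, hq⟩
  refine ⟨b * p - a * q, ?_⟩
  simp only [map_mul, map_sub]
  linear_combination (algebraMap (𝓞 K) K b) * hp - (algebraMap (𝓞 K) K a) * hq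

lemma absNorm_denom_sub_le (x y : K) :
    (Ideal.absNorm (denomIdeal K (x - y)) : ℝ) ≤
      (Ideal.absNorm (denomIdeal K x) : ℝ) * (Ideal.absNorm (denomIdeal K y) : ℝ) := by
  have hdvd : denomIdeal K (x - y) ∣ denomIdeal K x * denomIdeal K y :=
    Ideal.dvd_iff_le.mpr (denom_mul_le x y)
  have hpos : 0 < Ideal.absNorm (denomIdeal K x * denomIdeal K y) := by
    rw [Nat.pos_iff_ne_zero, Ne, Ideal.absNorm_eq_zero_iff, Ideal.mul_eq_bot]
    push_neg
    exact ⟨denomIdeal_ne_bot x, denomIdeal_ne_bot y⟩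
  have h := Nat.le_of_dvd hpos (map_dvd Ideal.absNorm hdvd)
  rw [map_mul] at h
  exact_mod_cast h

lemma prodmax_sub_le (x y : K) :
    ∏ v : InfinitePlace K, max 1 (v (x - y)) ^ v.mult ≤
      2 ^ (Module.finrank ℚ K) * (∏ v : InfinitePlace K, max 1 (v x) ^ v.mult) *
        (∏ v : InfinitePlace K, max 1 (v y) ^ v.mult) := by
  have key : ∀ v : InfinitePlace K,
      max 1 (v (x - y)) ^ v.mult ≤ (2 * max 1 (v x) * max 1 (v y)) ^ v.mult := by
    intro v
    apply pow_le_pow_left₀ (le_trans zero_le_one (le_max_left _ _))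
    have htri : v (x - y) ≤ v x + v y := v.1.sub_le_add x y
    have ha1 : (1 : ℝ) ≤ max 1 (v x) := le_max_left _ _
    have ha2 : v x ≤ max 1 (v x) := le_max_right _ _
    have hb1 : (1 : ℝ) ≤ max 1 (v y) := le_max_left _ _
    have hb2 : v y ≤ max 1 (v y) := le_max_right _ _
    refine max_le (by nlinarith) (by nlinarith)
  calc ∏ v : InfinitePlace K, max 1 (v (x - y)) ^ v.mult
      ≤ ∏ v : InfinitePlace K, (2 * max 1 (v x) * max 1 (v y)) ^ v.mult :=
        Finset.prod_le_prod (fun v _ => by positivity) (fun v _ => key v)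
    _ = (∏ v : InfinitePlace K, (2:ℝ) ^ v.mult) *
          (∏ v : InfinitePlace K, max 1 (v x) ^ v.mult) *
          (∏ v : InfinitePlace K, max 1 (v y) ^ v.mult) := by
        simp [mul_pow, Finset.prod_mul_distrib]
    _ = 2 ^ (Module.finrank ℚ K) * (∏ v : InfinitePlace K, max 1 (v x) ^ v.mult) *
          (∏ v : InfinitePlace K, max 1 (v y) ^ v.mult) := by
        rw [Finset.prod_pow_eq_pow_sum, InfinitePlace.sum_mult_eq]

lemma hgt_sub_le (x y : K) :
    hgt (x - y) ≤ 2 ^ (Module.finrank ℚ K) * hgt x * hgt y := by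
  have h1 := absNorm_denom_sub_le x y
  have h2 := prodmax_sub_le x y
  have h3 : (0:ℝ) ≤ ∏ v : InfinitePlace K, max 1 (v (x - y)) ^ v.mult :=
    le_trans zero_le_one (one_le_prodmax _)
  have h4 : (0:ℝ) ≤ (Ideal.absNorm (denomIdeal K x) : ℝ) * (Ideal.absNorm (denomIdeal K y) : ℝ) := by
    positivity
  calc hgt (x - y)
      ≤ ((Ideal.absNorm (denomIdeal K x) : ℝ) * (Ideal.absNorm (denomIdeal K y) : ℝ)) *
        (2 ^ (Module.finrank ℚ K) * (∏ v : InfinitePlace K, max 1 (v x) ^ v.mult) *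
          (∏ v : InfinitePlace K, max 1 (v y) ^ v.mult)) := mul_le_mul h1 h2 h3 h4
    _ = 2 ^ (Module.finrank ℚ K) * hgt x * hgt y := by unfold hgt; ring


open FractionalIdeal in
lemma one_le_absNorm_mul_norm {z : K} (hz : z ≠ 0) :
    (1:ℝ) ≤ (Ideal.absNorm (denomIdeal K z) : ℝ) * |(Algebra.norm ℚ z : ℝ)| := by
  set I : FractionalIdeal (𝓞 K)⁰ K :=
    (denomIdeal K z : FractionalIdeal (𝓞 K)⁰ K) * spanSingleton (𝓞 K)⁰ z with hI
  have hIle : I ≤ 1 := by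
    rw [hI, mul_le]
    intro i hi j hj
    obtain ⟨a, ha, rfl⟩ := (mem_coeIdeal _).mp hi
    obtain ⟨c, rfl⟩ := (mem_spanSingleton _).mp hj
    obtain ⟨p, hp⟩ := ha
    refine (mem_one_iff _).mpr ⟨c * p, ?_⟩
    rw [_root_.map_mul, Algebra.smul_def]
    linear_combination (-(algebraMap (𝓞 K) K c)) * hp
  obtain ⟨J, hJ⟩ := le_one_iff_exists_coeIdeal.mp hIle
  have hne : I ≠ 0 := by
    rw [hI]
    exact mul_ne_zero (coeIdeal_ne_zero.mpr (denomIdeal_ne_bot z))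
      (spanSingleton_ne_zero_iff.mpr hz)
  have hJne : J ≠ ⊥ := by
    rintro rfl
    rw [← hJ] at hne
    simp at hne
  have h1 : (1:ℚ) ≤ FractionalIdeal.absNorm I := by
    rw [← hJ, coeIdeal_absNorm]
    exact_mod_cast Nat.one_le_iff_ne_zero.mpr
      (fun h0 => hJne (Ideal.absNorm_eq_zero_iff.mp h0))
  have h2 : FractionalIdeal.absNorm I =
      (Ideal.absNorm (denomIdeal K z) : ℚ) * |Algebra.norm ℚ z| := by
    rw [hI, _root_.map_mul, coeIdeal_absNorm, absNorm_span_singleton]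
  rw [h2] at h1
  exact_mod_cast h1


variable {F : Subfield ℝ} [NumberField F]

lemma prod_place_le (z : F) :
    ∏ v : InfinitePlace F, v z ^ v.mult ≤
      |(z : ℝ)| * ∏ v : InfinitePlace F, max 1 (v z) ^ v.mult := by
  set φ : F →+* ℂ := Complex.ofRealHom.comp F.subtype with hφ
  set v₀ : InfinitePlace F := InfinitePlace.mk φ with hv₀def
  have hreal : v₀.IsReal := by
    rw [hv₀def, InfinitePlace.isReal_mk_iff]
    exact ComplexEmbedding.isReal_iff.mpr (RingHom.ext fun x => Complex.conj_ofReal _)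
  have hmult : v₀.mult = 1 := by simp only [InfinitePlace.mult, if_pos hreal]
  have hv₀z : v₀ z = |(z : ℝ)| := by
    rw [hv₀def, InfinitePlace.apply]
    exact Complex.norm_real _
  classical
  rw [← Finset.mul_prod_erase Finset.univ _ (Finset.mem_univ v₀), hmult, hv₀z, pow_one]
  have h1 : ∏ v ∈ Finset.univ.erase v₀, v z ^ v.mult ≤
      ∏ v ∈ Finset.univ.erase v₀, max 1 (v z) ^ v.mult :=
    Finset.prod_le_prod (fun v _ => pow_nonneg (v.1.nonneg z) _)
      (fun v _ => pow_le_pow_left₀ (v.1.nonneg z) (le_max_right _ _) _)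
  have h2 : ∏ v ∈ Finset.univ.erase v₀, max 1 (v z) ^ v.mult ≤
      ∏ v : InfinitePlace F, max 1 (v z) ^ v.mult :=
    by
      rw [← Finset.mul_prod_erase Finset.univ
        (fun v : InfinitePlace F => max 1 (v z) ^ v.mult) (Finset.mem_univ v₀)]
      exact le_mul_of_one_le_left
        (Finset.prod_nonneg fun v _ => pow_nonneg (le_trans zero_le_one (le_max_left _ _)) _)
        (one_le_pow₀ (le_max_left _ _))
  exact mul_le_mul_of_nonneg_left (le_trans h1 h2) (abs_nonneg _)

lemma one_le_abs_mul_hgt {z : F} (hz : z ≠ 0) : 1 ≤ |(z : ℝ)| * hgt z := by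
  have ha := one_le_absNorm_mul_norm hz
  have hb := (InfinitePlace.prod_eq_abs_norm z).symm
  have hc := prod_place_le z
  calc (1:ℝ) ≤ (Ideal.absNorm (denomIdeal F z) : ℝ) * |(Algebra.norm ℚ z : ℝ)| := ha
    _ = (Ideal.absNorm (denomIdeal F z) : ℝ) * ∏ v : InfinitePlace F, v z ^ v.mult := by
        rw [← Rat.cast_abs, hb]
    _ ≤ (Ideal.absNorm (denomIdeal F z) : ℝ) *
          (|(z : ℝ)| * ∏ v : InfinitePlace F, max 1 (v z) ^ v.mult) :=
        mul_le_mul_of_nonneg_left hc (by positivity)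
    _ = |(z : ℝ)| * hgt z := by unfold hgt; ring

end WRAux

open WRAux

/-- Counting planar well-rounded similarity classes defined over a fixed real number
field `K` of degree `d`: the set `{x ∈ K : 0 ≤ x ≤ 2 - √3, h(x) ≤ T}` — which is in
bijection with the well-rounded similarity classes defined over `K` of height at most
`T`, via `x ↦ ⟨M(x)⟩` — is finite of cardinality at most
`(π/(2√12))·(1 + 4^{2(d+1)}·(2+√3)^d·T^{2d})`. -/
theorem card_wellRounded_classes_le (K : Subfield ℝ) [NumberField K] (T : ℝ) (hT : 1 ≤ T) :
    {x : K | 0 ≤ (x : ℝ) ∧ (x : ℝ) ≤ 2 - Real.sqrt 3 ∧ weilHeight x ≤ T}.Finite ∧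
      (({x : K | 0 ≤ (x : ℝ) ∧ (x : ℝ) ≤ 2 - Real.sqrt 3 ∧ weilHeight x ≤ T}.ncard : ℝ) ≤
        Real.pi / (2 * Real.sqrt 12) *
          (1 + 4 ^ (2 * (Module.finrank ℚ K + 1)) *
            (2 + Real.sqrt 3) ^ (Module.finrank ℚ K) *
            T ^ (2 * Module.finrank ℚ K))) := by
  classical
  set d := Module.finrank ℚ K with hd
  set S := {x : K | 0 ≤ (x : ℝ) ∧ (x : ℝ) ≤ 2 - Real.sqrt 3 ∧ weilHeight x ≤ T} with hS
  have hT0 : (0:ℝ) ≤ T := by linarith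
  set Q : ℝ := 2 ^ d * T ^ (2 * d) with hQdef
  have hQ : (1:ℝ) ≤ Q := by
    have h1 : (1:ℝ) ≤ 2 ^ d := one_le_pow₀ one_le_two
    have h2 : (1:ℝ) ≤ T ^ (2 * d) := one_le_pow₀ hT
    nlinarith
  have hQ0 : (0:ℝ) < Q := lt_of_lt_of_le one_pos hQ
  have hsq3a : (1:ℝ) ≤ Real.sqrt 3 := by
    have h := Real.sqrt_le_sqrt (show (1:ℝ) ≤ 3 by norm_num)
    simpa using h
  have hsq3b : Real.sqrt 3 ≤ 2 := by
    have h := Real.sqrt_le_sqrt (show (3:ℝ) ≤ 4 by norm_num)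
    rwa [show (4:ℝ) = 2 ^ 2 by norm_num, Real.sqrt_sq (by norm_num : (0:ℝ) ≤ 2)] at h
  have hL0 : (0:ℝ) ≤ 2 - Real.sqrt 3 := by linarith
  have hL1 : 2 - Real.sqrt 3 ≤ 1 := by linarith
  -- separation
  have hsep : ∀ x ∈ S, ∀ y ∈ S, x ≠ y → Q⁻¹ ≤ |(x : ℝ) - (y : ℝ)| := by
    intro x hx y hy hne
    have hz : x - y ≠ 0 := sub_ne_zero.mpr hne
    have h1 := one_le_abs_mul_hgt hz
    have hco : ((x - y : K) : ℝ) = (x : ℝ) - (y : ℝ) := by push_cast; ring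
    rw [hco] at h1
    have h2 : hgt (x - y) ≤ Q := by
      have hhx : hgt x ≤ T ^ d := hgt_le_of_height_le hx.2.2
      have hhy : hgt y ≤ T ^ d := hgt_le_of_height_le hy.2.2
      have h1x := one_le_hgt x
      have h1y := one_le_hgt y
      have h2d : (0:ℝ) < 2 ^ d := by positivity
      calc hgt (x - y) ≤ 2 ^ d * hgt x * hgt y := hgt_sub_le x y
        _ = 2 ^ d * (hgt x * hgt y) := by ring
        _ ≤ 2 ^ d * (T ^ d * T ^ d) := by
            refine mul_le_mul_of_nonneg_left ?_ h2d.le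
            exact mul_le_mul hhx hhy (by linarith) (pow_nonneg hT0 d)
        _ = 2 ^ d * T ^ d * T ^ d := by ring
        _ = Q := by rw [hQdef, two_mul, pow_add]; ring
    have h3 : (1:ℝ) ≤ |(x : ℝ) - (y : ℝ)| * Q :=
      le_trans h1 (mul_le_mul_of_nonneg_left h2 (abs_nonneg _))
    rw [inv_eq_one_div]
    exact (div_le_iff₀ hQ0).mpr h3
  -- the floor map
  set g : K → ℤ := fun x => ⌊(x : ℝ) * Q⌋ with hg
  have hinj : Set.InjOn g S := by
    intro x hx y hy hgxy
    by_contra hne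
    have hs := hsep x hx y hy hne
    have c1 : ((⌊(x : ℝ) * Q⌋ : ℤ) : ℝ) = ((⌊(y : ℝ) * Q⌋ : ℤ) : ℝ) := by
      exact_mod_cast hgxy
    have f1 := Int.floor_le ((x : ℝ) * Q)
    have f2 := Int.lt_floor_add_one ((x : ℝ) * Q)
    have f3 := Int.floor_le ((y : ℝ) * Q)
    have f4 := Int.lt_floor_add_one ((y : ℝ) * Q)
    have habs : |(x : ℝ) * Q - (y : ℝ) * Q| < 1 := abs_lt.mpr ⟨by linarith, by linarith⟩
    rw [show (x : ℝ) * Q - (y : ℝ) * Q = ((x : ℝ) - (y : ℝ)) * Q by ring, abs_mul,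
      abs_of_pos hQ0] at habs
    have hge : (1:ℝ) ≤ |(x : ℝ) - (y : ℝ)| * Q := by
      calc (1:ℝ) = Q⁻¹ * Q := (inv_mul_cancel₀ hQ0.ne').symm
        _ ≤ |(x : ℝ) - (y : ℝ)| * Q := mul_le_mul_of_nonneg_right hs hQ0.le
    linarith
  have himg : g '' S ⊆ Set.Icc (0 : ℤ) ⌊(2 - Real.sqrt 3) * Q⌋ := by
    rintro _ ⟨x, hx, rfl⟩
    refine ⟨Int.floor_nonneg.mpr (mul_nonneg hx.1 hQ0.le), ?_⟩
    exact Int.floor_le_floor (mul_le_mul_of_nonneg_right hx.2.1 hQ0.le)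
  have hfinIcc : (Set.Icc (0 : ℤ) ⌊(2 - Real.sqrt 3) * Q⌋).Finite := Set.finite_Icc _ _
  have hSfin : S.Finite := Set.Finite.of_finite_image (hfinIcc.subset himg) hinj
  refine ⟨hSfin, ?_⟩
  have hM0 : (0 : ℤ) ≤ ⌊(2 - Real.sqrt 3) * Q⌋ :=
    Int.floor_nonneg.mpr (mul_nonneg hL0 hQ0.le)
  have hIccCard : (Set.Icc (0 : ℤ) ⌊(2 - Real.sqrt 3) * Q⌋).ncard =
      (⌊(2 - Real.sqrt 3) * Q⌋ + 1).toNat := by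
    rw [← Finset.coe_Icc, Set.ncard_coe_finset, Int.card_Icc, sub_zero]
  have hcard : (S.ncard : ℝ) ≤ (2 - Real.sqrt 3) * Q + 1 := by
    have e1 : S.ncard ≤ (⌊(2 - Real.sqrt 3) * Q⌋ + 1).toNat := by
      rw [← hIccCard, ← Set.ncard_image_of_injOn hinj]
      exact Set.ncard_le_ncard himg hfinIcc
    calc (S.ncard : ℝ) ≤ ((⌊(2 - Real.sqrt 3) * Q⌋ + 1).toNat : ℝ) := by exact_mod_cast e1
      _ = ((⌊(2 - Real.sqrt 3) * Q⌋ : ℝ) + 1) := by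
          have h := Int.toNat_of_nonneg (show (0:ℤ) ≤ ⌊(2 - Real.sqrt 3) * Q⌋ + 1 by omega)
          exact_mod_cast congrArg (fun n : ℤ => (n : ℝ)) h
      _ ≤ (2 - Real.sqrt 3) * Q + 1 := by
          have := Int.floor_le ((2 - Real.sqrt 3) * Q); linarith
  -- final arithmetic
  have hπ : (3:ℝ) ≤ Real.pi := Real.pi_gt_three.le
  have h12a : (0:ℝ) < Real.sqrt 12 := Real.sqrt_pos.mpr (by norm_num)
  have h12b : Real.sqrt 12 ≤ 4 := by
    have h := Real.sqrt_le_sqrt (show (12:ℝ) ≤ 16 by norm_num)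
    rwa [show (16:ℝ) = 4 ^ 2 by norm_num, Real.sqrt_sq (by norm_num : (0:ℝ) ≤ 4)] at h
  have hc : (3:ℝ)/8 ≤ Real.pi / (2 * Real.sqrt 12) := by
    rw [div_le_div_iff₀ (by norm_num) (by positivity)]
    nlinarith
  have hA : 16 * Q ≤ 4 ^ (2 * (d + 1)) * (2 + Real.sqrt 3) ^ d * T ^ (2 * d) := by
    have e1 : (4:ℝ) ^ (2 * (d + 1)) = 16 * 16 ^ d := by
      rw [pow_mul]
      norm_num [pow_succ]
      ring
    have e2 : (2:ℝ) ^ d ≤ 16 ^ d := pow_le_pow_left₀ (by norm_num) (by norm_num) d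
    have e3 : (1:ℝ) ≤ (2 + Real.sqrt 3) ^ d := one_le_pow₀ (by nlinarith [Real.sqrt_nonneg 3])
    have e4 : (0:ℝ) ≤ T ^ (2 * d) := pow_nonneg hT0 _
    calc 16 * Q = 16 * 2 ^ d * T ^ (2 * d) := by rw [hQdef]; ring
      _ ≤ 16 * 16 ^ d * T ^ (2 * d) := by nlinarith
      _ = (4 ^ (2 * (d + 1))) * 1 * T ^ (2 * d) := by rw [e1]; ring
      _ ≤ 4 ^ (2 * (d + 1)) * (2 + Real.sqrt 3) ^ d * T ^ (2 * d) := by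
          apply mul_le_mul_of_nonneg_right _ e4
          exact mul_le_mul_of_nonneg_left e3 (by positivity)
  have hgoal : (2 - Real.sqrt 3) * Q + 1 ≤
      Real.pi / (2 * Real.sqrt 12) *
        (1 + 4 ^ (2 * (d + 1)) * (2 + Real.sqrt 3) ^ d * T ^ (2 * d)) := by
    have hLQ : (2 - Real.sqrt 3) * Q ≤ Q := by nlinarith
    have step1 : (2 - Real.sqrt 3) * Q + 1 ≤ 3/8 * (1 + 16 * Q) := by nlinarith
    have step2 : (3:ℝ)/8 * (1 + 16 * Q) ≤ Real.pi / (2 * Real.sqrt 12) * (1 + 16 * Q) :=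
      mul_le_mul_of_nonneg_right hc (by nlinarith)
    have step3 : Real.pi / (2 * Real.sqrt 12) * (1 + 16 * Q) ≤
        Real.pi / (2 * Real.sqrt 12) *
          (1 + 4 ^ (2 * (d + 1)) * (2 + Real.sqrt 3) ^ d * T ^ (2 * d)) := by
      apply mul_le_mul_of_nonneg_left _ (by positivity)
      linarith
    linarith
  linarith


end
end

section
/- Let n ≥ 1 and let c = (c₁,…,c_n) ∈ ℤ^n. The n vectors c, ρ(c), …, ρ^{n−1}(c) are linearly independent over ℚ (equivalently, the lattice Λ(c) = span_ℤ{c, ρ(c), …, ρ^{n−1}(c)} has full rank n) if and only if the residue class of the polynomial c(X) = ∑_{k=1}^n c_k X^{k−1} in R_n = ℤ[X]/(X^n − 1) is not a zero divisor (i.e. lies in the set of non-zero-divisors of R_n). -/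
noncomputable section

open Polynomial

/-- The rotation shift operator on `ℤⁿ`: `ρ(c₁, …, c_n) = (c_n, c₁, …, c_{n-1})`. -/
def rotShiftZ (n : ℕ) (c : Fin n → ℤ) : Fin n → ℤ :=
  fun i => c ((finRotate n).symm i)

/-- The quotient ring `R_n = ℤ[X]/(Xⁿ - 1)`. -/
abbrev Rring (n : ℕ) := Polynomial ℤ ⧸ Ideal.span {(X : Polynomial ℤ) ^ n - 1}

/-- The class of the polynomial `c(X) = ∑ c_k X^(k-1)` in `R_n`. -/
def polyClass (n : ℕ) (c : Fin n → ℤ) : Rring n :=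
  Ideal.Quotient.mk (Ideal.span {(X : Polynomial ℤ) ^ n - 1})
    (∑ k : Fin n, C (c k) * X ^ (k : ℕ))

namespace RotAux

variable (n : ℕ)

/-- The class of `X` in `R_n`. -/
def u : Rring n := Ideal.Quotient.mk _ (X : Polynomial ℤ)

lemma u_pow_n : (u n) ^ n = 1 := by
  have : ((X : Polynomial ℤ) ^ n - 1) ∈ Ideal.span {(X : Polynomial ℤ) ^ n - 1} :=
    Ideal.subset_span rfl
  have h : Ideal.Quotient.mk (Ideal.span {(X : Polynomial ℤ) ^ n - 1})
      ((X : Polynomial ℤ) ^ n - 1) = 0 := (Ideal.Quotient.eq_zero_iff_mem).2 this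
  have := sub_eq_zero.mp (by simpa [map_sub, map_pow] using h)
  simpa [u, map_pow] using this

lemma u_pow_mod (hn : 1 ≤ n) (a : ℕ) : (u n) ^ (a % n) = (u n) ^ a := by
  conv_rhs => rw [← Nat.mod_add_div a n]
  rw [pow_add, pow_mul, u_pow_n, one_pow, mul_one]

lemma polyClass_eq_sum (c : Fin n → ℤ) :
    polyClass n c = ∑ k : Fin n, (c k) • (u n) ^ (k : ℕ) := by
  rw [polyClass, map_sum]
  refine Finset.sum_congr rfl fun k _ => ?_
  rw [map_mul, map_pow, zsmul_eq_mul, eq_intCast C (c k), map_intCast]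
  rfl

lemma polyClass_rot (hn : 1 ≤ n) (c : Fin n → ℤ) :
    polyClass n (rotShiftZ n c) = u n * polyClass n c := by
  obtain ⟨m, rfl⟩ : ∃ m, n = m + 1 := ⟨n - 1, by omega⟩
  rw [polyClass_eq_sum, polyClass_eq_sum]
  rw [Finset.mul_sum]
  rw [← Equiv.sum_comp (finRotate (m + 1))
    (fun k : Fin (m+1) => (rotShiftZ (m+1) c k) • (u (m+1)) ^ (k : ℕ))]
  refine Finset.sum_congr rfl fun j _ => ?_
  have h1 : rotShiftZ (m+1) c (finRotate (m+1) j) = c j := by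
    simp only [rotShiftZ, Equiv.symm_apply_apply]
  rw [h1, mul_smul_comm]
  congr 1
  have h2 : ((finRotate (m+1) j : ℕ)) = ((j : ℕ) + 1) % (m+1) := by
    rw [coe_finRotate]
    split_ifs with h
    · subst h; simp [Fin.last]
    · have : (j : ℕ) < m := Fin.val_lt_last h
      rw [Nat.mod_eq_of_lt (by omega)]
  rw [h2, u_pow_mod _ hn, pow_succ, mul_comm]

lemma polyClass_iterate (hn : 1 ≤ n) (c : Fin n → ℤ) (k : ℕ) :
    polyClass n ((rotShiftZ n)^[k] c) = (u n) ^ k * polyClass n c := by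
  induction k with
  | zero => simp
  | succ k ih =>
    rw [Function.iterate_succ_apply', polyClass_rot n hn, ih, ← mul_assoc, pow_succ, mul_comm ((u n)^k)]

lemma monic_g (hn : 1 ≤ n) : ((X : Polynomial ℤ) ^ n - 1).Monic := by
  simpa using monic_X_pow_sub_C (1 : ℤ) (by omega)

/-- A basis of `R_n` given by powers of `u`. -/
def bb (hn : 1 ≤ n) : Module.Basis (Fin n) ℤ (Rring n) :=
  ((AdjoinRoot.powerBasis' (monic_g n hn)).basis).reindex
    (finCongr (by simpa using (natDegree_X_pow_sub_C (n := n) (r := (1:ℤ)))))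

lemma bb_apply (hn : 1 ≤ n) (k : Fin n) : bb n hn k = (u n) ^ (k : ℕ) := by
  have h1 : bb n hn k
      = (AdjoinRoot.powerBasis' (monic_g n hn)).basis
          ((finCongr (by simpa using (natDegree_X_pow_sub_C (n := n) (r := (1:ℤ))))).symm k) :=
    (AdjoinRoot.powerBasis' (monic_g n hn)).basis.reindex_apply _ k
  rw [h1, PowerBasis.basis_eq_pow]
  simp only [AdjoinRoot.powerBasis'_gen, finCongr_symm, finCongr_apply, Fin.coe_cast]
  rfl

end RotAux

open RotAux in
/-- The rotation shifts `c, ρ(c), …, ρ^{n-1}(c)` of `c ∈ ℤⁿ` are linearly independent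
over `ℚ` (equivalently, `Λ(c)` has full rank `n`) if and only if the class of
`c(X) = ∑ c_k X^{k-1}` in `R_n = ℤ[X]/(Xⁿ - 1)` is not a zero divisor. -/
theorem rotShifts_linearIndependent_iff_nonZeroDivisor (n : ℕ) (hn : 1 ≤ n) (c : Fin n → ℤ) :
    LinearIndependent ℚ
        (fun k : Fin n => fun i : Fin n => (((rotShiftZ n)^[k] c) i : ℚ)) ↔
      polyClass n c ∈ nonZeroDivisors (Rring n) := by
  -- step 1: over ℚ ↔ over ℤ
  rw [← LinearIndependent.iff_fractionRing ℤ ℚ]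
  -- step 2: transfer through the cast map
  have hcast : LinearIndependent ℤ
      (fun k : Fin n => fun i : Fin n => (((rotShiftZ n)^[k] c) i : ℚ)) ↔
      LinearIndependent ℤ (fun k : Fin n => (rotShiftZ n)^[k] c) := by
    let j : (Fin n → ℤ) →ₗ[ℤ] (Fin n → ℚ) :=
      LinearMap.pi (fun i => (Int.castRingHom ℚ).toIntLinearMap.comp (LinearMap.proj i))
    have hj : LinearMap.ker j = ⊥ := by
      rw [LinearMap.ker_eq_bot]
      intro x y h
      funext i
      have h2 : ((x i : ℚ)) = (y i : ℚ) := congrFun h i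
      exact_mod_cast h2
    exact j.linearIndependent_iff hj
  rw [hcast]
  -- step 3: transfer to R_n via the basis
  set b := bb n hn
  have hsum : ∀ d : Fin n → ℤ, polyClass n d = b.equivFun.symm d := by
    intro d
    rw [Module.Basis.equivFun_symm_apply, polyClass_eq_sum]
    exact Finset.sum_congr rfl fun k _ => by rw [bb_apply]
  have hRing : LinearIndependent ℤ (fun k : Fin n => (rotShiftZ n)^[k] c) ↔
      LinearIndependent ℤ (fun k : Fin n => (u n) ^ (k : ℕ) * polyClass n c) := by
    rw [← (b.equivFun.symm.toLinearMap.linearIndependent_iff (LinearMap.ker_eq_bot.2 b.equivFun.symm.injective))]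
    apply iff_of_eq; congr 1
    funext k
    show b.equivFun.symm ((rotShiftZ n)^[k] c) = _
    rw [← hsum, polyClass_iterate n hn]
  rw [hRing]
  constructor
  · -- linear independence → nonzerodivisor
    intro hLI
    rw [mem_nonZeroDivisors_iff_right]
    intro x hx
    have hrepr := b.sum_repr x
    have h0 : ∑ k : Fin n, (b.repr x k) • ((u n) ^ (k : ℕ) * polyClass n c) = 0 := by
      have : (∑ k : Fin n, (b.repr x k) • b k) * polyClass n c = 0 := by
        rw [hrepr]; exact hx
      rw [Finset.sum_mul] at this
      simp only [smul_mul_assoc, b, bb_apply n hn] at this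
      exact this
    have := Fintype.linearIndependent_iff.1 hLI (fun k => b.repr x k) h0
    have hx0 : ∀ k, b.repr x k = 0 := fun k => this k
    calc x = ∑ k : Fin n, (b.repr x k) • b k := hrepr.symm
    _ = 0 := by simp [hx0]
  · -- nonzerodivisor → linear independence
    intro hnzd
    have hb : LinearIndependent ℤ (fun k : Fin n => (u n) ^ (k : ℕ)) := by
      have := b.linearIndependent
      convert this using 1
      funext k
      rw [bb_apply]
    have hker : LinearMap.ker (LinearMap.mulRight ℤ (polyClass n c)) = ⊥ := by
      rw [LinearMap.ker_eq_bot]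
      intro x y h
      have h' : x * polyClass n c = y * polyClass n c := by
        simpa [LinearMap.mulRight_apply] using h
      have h2 : (x - y) * polyClass n c = 0 := by rw [sub_mul, h', sub_self]
      exact sub_eq_zero.1 ((mem_nonZeroDivisors_iff_right.1 hnzd) _ h2)
    exact hb.map' (LinearMap.mulRight ℤ (polyClass n c)) hker

end
end

section
/- Let n ≥ 3 be odd and let c = (1, 1, 0, …, 0) ∈ ℤ^n. Then the root lattice D_n = {x ∈ ℤ^n : ∑ x_i ≡ 0 (mod 2)} satisfies D_n = span_ℤ{c, ρ(c), …, ρ^{n−1}(c)}; in particular D_n is simple cyclic. -/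
noncomputable section

/-- The root lattice `D_n = {x ∈ ℤⁿ : ∑ xᵢ ≡ 0 (mod 2)}`. -/
def rootD (n : ℕ) : Submodule ℤ (Fin n → ℤ) where
  carrier := {x | (2 : ℤ) ∣ ∑ i, x i}
  add_mem' := by
    intro a b ha hb
    simpa [Finset.sum_add_distrib] using dvd_add ha hb
  zero_mem' := by simp
  smul_mem' := by
    intro c x hx
    simpa [Pi.smul_apply, smul_eq_mul, ← Finset.mul_sum] using hx.mul_left c

/-- The vector `c = (1, 1, 0, …, 0) ∈ ℤⁿ`. -/
def cVec (n : ℕ) : Fin n → ℤ :=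
  fun i => if (i : ℕ) = 0 then 1 else if (i : ℕ) = 1 then 1 else 0

open Fin.NatCast Fin.CommRing

lemma rotShiftZ_apply' (n : ℕ) [NeZero n] (c : Fin n → ℤ) (i : Fin n) :
    rotShiftZ n c i = c (i - 1) := by
  obtain ⟨m, rfl⟩ := Nat.exists_eq_succ_of_ne_zero (NeZero.ne n)
  unfold rotShiftZ
  congr 1
  rw [Equiv.symm_apply_eq, finRotate_succ_apply, sub_add_cancel]

lemma rot_iter (n : ℕ) [NeZero n] (m : ℕ) (c : Fin n → ℤ) (i : Fin n) :
    (rotShiftZ n)^[m] c i = c (i - (m : Fin n)) := by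
  induction m generalizing i with
  | zero => simp
  | succ m ih =>
      rw [Function.iterate_succ_apply', rotShiftZ_apply', ih]
      congr 1
      push_cast
      ring

lemma vk_eq (n : ℕ) [NeZero n] (hn : 2 ≤ n) (k : Fin n) :
    (rotShiftZ n)^[(k : ℕ)] (cVec n)
      = Pi.single k (1 : ℤ) + Pi.single (k + 1) (1 : ℤ) := by
  funext i
  rw [rot_iter, Fin.cast_val_eq_self]
  have hone : ((1 : Fin n) : ℕ) = 1 := by
    rw [Fin.val_one', Nat.mod_eq_of_lt (by omega)]
  have h0' : ((i - k : Fin n) : ℕ) = 0 ↔ i - k = 0 := by rw [Fin.ext_iff]; simp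
  have h0 : ((i - k : Fin n) : ℕ) = 0 ↔ i = k := by rw [h0', sub_eq_zero]
  have h1' : ((i - k : Fin n) : ℕ) = 1 ↔ i - k = 1 := by rw [Fin.ext_iff, hone]
  have h1 : ((i - k : Fin n) : ℕ) = 1 ↔ i = k + 1 := by rw [h1', sub_eq_iff_eq_add']
  have hne : k ≠ k + 1 := by
    intro h
    have h10 : (1 : Fin n) = 0 := add_eq_left.mp h.symm
    have := congrArg Fin.val h10
    rw [hone] at this
    simp at this
  show cVec n (i - k) = _
  unfold cVec
  rw [Pi.add_apply, Pi.single_apply, Pi.single_apply]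
  by_cases hik : i = k
  · rw [if_pos (h0.mpr hik), if_pos hik, if_neg (by rw [hik]; exact hne)]
    norm_num
  · rw [if_neg (fun h => hik (h0.mp h)), if_neg hik]
    by_cases hik1 : i = k + 1
    · rw [if_pos (h1.mpr hik1), if_pos hik1]
      norm_num
    · rw [if_neg (fun h => hik1 (h1.mp h)), if_neg hik1]
      norm_num

/-- For odd `n ≥ 3`, the root lattice `D_n` is the span of the rotation shifts of
`c = (1, 1, 0, …, 0)`; in particular `D_n` is simple cyclic. -/
theorem rootD_simpleCyclic_of_odd (n : ℕ) (hn : 3 ≤ n) (hodd : Odd n) :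
    rootD n = Submodule.span ℤ (Set.range fun k : Fin n => (rotShiftZ n)^[k] (cVec n)) := by
  haveI : NeZero n := ⟨by omega⟩
  set N := Submodule.span ℤ (Set.range fun k : Fin n => (rotShiftZ n)^[(k : ℕ)] (cVec n)) with hN
  have hv : ∀ k : Fin n, Pi.single k (1 : ℤ) + Pi.single (k + 1) (1 : ℤ) ∈ N := by
    intro k
    rw [← vk_eq n (by omega) k]
    exact Submodule.subset_span ⟨k, rfl⟩
  apply le_antisymm
  · -- rootD ≤ span
    have hd : ∀ k : Fin n, Pi.single k (1 : ℤ) - Pi.single (k + 2) (1 : ℤ) ∈ N := by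
      intro k
      have h := N.sub_mem (hv k) (hv (k + 1))
      have heq : ((Pi.single k (1 : ℤ) : Fin n → ℤ) + Pi.single (k + 1) (1 : ℤ))
          - (Pi.single (k + 1) (1 : ℤ) + Pi.single (k + 1 + 1) (1 : ℤ))
          = Pi.single k (1 : ℤ) - Pi.single (k + 2) (1 : ℤ) := by
        rw [show k + 1 + 1 = k + 2 by ring]
        abel
      rwa [heq] at h
    have h2m : ∀ m : ℕ,
        Pi.single (0 : Fin n) (1 : ℤ) - Pi.single ((2 * m : ℕ) : Fin n) (1 : ℤ) ∈ N := by
      intro m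
      induction m with
      | zero => simp only [Nat.mul_zero, Nat.cast_zero, sub_self]; exact N.zero_mem
      | succ m ih =>
          have h := N.add_mem ih (hd ((2 * m : ℕ) : Fin n))
          have heq : ((2 * m : ℕ) : Fin n) + 2 = ((2 * (m + 1) : ℕ) : Fin n) := by
            push_cast
            ring
          rw [heq, sub_add_sub_cancel] at h
          exact h
    have hall : ∀ j : Fin n, Pi.single (0 : Fin n) (1 : ℤ) - Pi.single j (1 : ℤ) ∈ N := by
      intro j
      have h := h2m ((j : ℕ) * ((n + 1) / 2))
      have hcast : ((2 * ((j : ℕ) * ((n + 1) / 2)) : ℕ) : Fin n) = j := by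
        obtain ⟨t, ht⟩ := hodd
        have h2 : 2 * ((j : ℕ) * ((n + 1) / 2)) = (j : ℕ) * (n + 1) := by
          have hh : 2 * ((n + 1) / 2) = n + 1 := by omega
          rw [show 2 * ((j : ℕ) * ((n + 1) / 2)) = (j : ℕ) * (2 * ((n + 1) / 2)) by ring, hh]
        rw [h2]
        push_cast
        rw [Fin.natCast_self]
        ring
      rwa [hcast] at h
    have h2e0 : Pi.single (0 : Fin n) (1 : ℤ) + Pi.single (0 : Fin n) (1 : ℤ) ∈ N := by
      have h := N.add_mem (hv 0) (hall 1)
      rw [zero_add] at h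
      have heq : ((Pi.single (0 : Fin n) (1 : ℤ) : Fin n → ℤ) + Pi.single (1 : Fin n) (1 : ℤ))
          + (Pi.single (0 : Fin n) (1 : ℤ) - Pi.single (1 : Fin n) (1 : ℤ))
          = Pi.single (0 : Fin n) (1 : ℤ) + Pi.single (0 : Fin n) (1 : ℤ) := by abel
      rwa [heq] at h
    intro x hx
    obtain ⟨t, ht⟩ : (2 : ℤ) ∣ ∑ i, x i := hx
    have hx_eq : x = (∑ i, x i • (Pi.single i (1 : ℤ) - Pi.single (0 : Fin n) (1 : ℤ)))
        + t • (Pi.single (0 : Fin n) (1 : ℤ) + Pi.single (0 : Fin n) (1 : ℤ)) := by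
      funext j
      simp only [Pi.add_apply, Finset.sum_apply, Pi.smul_apply, Pi.sub_apply, smul_eq_mul,
        Pi.single_apply, mul_sub, Finset.sum_sub_distrib, mul_ite, mul_one, mul_zero,
        Finset.sum_ite_eq, Finset.mem_univ, if_true]
      by_cases hj : j = 0
      · simp only [hj, if_true, if_pos rfl]
        rw [ht]; ring
      · simp [hj]
    rw [hx_eq]
    refine N.add_mem (Submodule.sum_mem N fun i _ => ?_) (N.smul_mem t h2e0)
    have h := N.smul_mem (-(x i)) (hall i)
    have heq : (-(x i)) • ((Pi.single (0 : Fin n) (1 : ℤ) : Fin n → ℤ) - Pi.single i (1 : ℤ))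
        = x i • (Pi.single i (1 : ℤ) - Pi.single (0 : Fin n) (1 : ℤ)) := by module
    rwa [heq] at h
  · -- span ≤ rootD
    rw [hN, Submodule.span_le]
    rintro _ ⟨k, rfl⟩
    show (2 : ℤ) ∣ ∑ i, ((rotShiftZ n)^[(k : ℕ)] (cVec n)) i
    rw [vk_eq n (by omega) k]
    simp [Finset.sum_add_distrib, Pi.single_apply]

end
end

section
/- Let n ≥ 2 be even. Then there is no vector c ∈ ℤ^n such that D_n = span_ℤ{c, ρ(c), …, ρ^{n−1}(c)}; that is, the root lattice D_n is not simple cyclic. -/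
noncomputable section

/-- Sum of coordinates is invariant under rotation. -/
lemma sum_rotShiftZ (n : ℕ) (y : Fin n → ℤ) : ∑ i, rotShiftZ n y i = ∑ i, y i := by
  simpa [rotShiftZ] using (Equiv.sum_comp (finRotate n).symm y)

lemma neg_one_pow_finRotate (n : ℕ) (hn : Even n) (j : Fin n) :
    ((-1 : ℤ)) ^ ((finRotate n j : ℕ)) = -(-1 : ℤ) ^ (j : ℕ) := by
  rcases n with _ | m
  · exact absurd j.2 (by simp)
  · rw [finRotate_succ_apply, Fin.val_add_one]
    by_cases h : j = Fin.last m
    · subst h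
      rw [if_pos rfl, pow_zero, Fin.val_last]
      have h1 : ((-1 : ℤ)) ^ (m + 1) = 1 := Even.neg_one_pow (by simpa using hn)
      rw [pow_succ] at h1
      linarith
    · rw [if_neg h, pow_succ]
      ring

/-- Alternating sum of coordinates is negated under rotation (for even `n`). -/
lemma alt_rotShiftZ (n : ℕ) (hn : Even n) (y : Fin n → ℤ) :
    ∑ i : Fin n, (-1 : ℤ) ^ (i : ℕ) * rotShiftZ n y i = -∑ i : Fin n, (-1 : ℤ) ^ (i : ℕ) * y i := by
  have h := Equiv.sum_comp (finRotate n) (fun i => (-1 : ℤ) ^ (i : ℕ) * rotShiftZ n y i)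
  rw [← h]
  rw [← Finset.sum_neg_distrib]
  refine Finset.sum_congr rfl fun j _ => ?_
  rw [neg_one_pow_finRotate n hn j]
  simp only [rotShiftZ, Equiv.symm_apply_apply, neg_mul]

lemma sum_iter (n : ℕ) (c : Fin n → ℤ) (k : ℕ) :
    ∑ i, (rotShiftZ n)^[k] c i = ∑ i, c i := by
  induction k with
  | zero => simp
  | succ k ih =>
    rw [Function.iterate_succ_apply', sum_rotShiftZ]
    exact ih

lemma alt_iter (n : ℕ) (hn : Even n) (c : Fin n → ℤ) (k : ℕ) :
    ∑ i : Fin n, (-1 : ℤ) ^ (i : ℕ) * (rotShiftZ n)^[k] c i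
      = (-1 : ℤ) ^ k * ∑ i : Fin n, (-1 : ℤ) ^ (i : ℕ) * c i := by
  induction k with
  | zero => simp
  | succ k ih =>
    rw [Function.iterate_succ_apply', alt_rotShiftZ n hn, ih, pow_succ]
    ring

/-- parity: the alternating-weighted sum is congruent mod 2 to the plain sum -/
lemma two_dvd_sub_alt {n : ℕ} (w : Fin n → ℤ) :
    (2 : ℤ) ∣ (∑ i, w i) - ∑ i : Fin n, (-1 : ℤ) ^ (i : ℕ) * w i := by
  rw [← Finset.sum_sub_distrib]
  refine Finset.dvd_sum fun i _ => ?_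
  rcases Nat.even_or_odd (i : ℕ) with h | h
  · rw [h.neg_one_pow]; ring_nf; exact dvd_zero 2
  · rw [h.neg_one_pow]
    have : w i - (-1) * w i = 2 * w i := by ring
    rw [this]; exact Dvd.intro _ rfl

/-- For even `n ≥ 2`, the root lattice `D_n` is not simple cyclic: it is not the
`ℤ`-span of the rotation shifts of any single vector. -/
theorem rootD_not_simpleCyclic_of_even (n : ℕ) (hn : 2 ≤ n) (heven : Even n) :
    ¬ ∃ c : Fin n → ℤ,
        rootD n = Submodule.span ℤ (Set.range fun k : Fin n => (rotShiftZ n)^[k] c) := by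
  rintro ⟨c, hspan⟩
  set f : Fin n → (Fin n → ℤ) := fun k : Fin n => (rotShiftZ n)^[(k : ℕ)] c with hf
  set s : ℤ := ∑ i, c i with hs
  set t : ℤ := ∑ i : Fin n, (-1 : ℤ) ^ (i : ℕ) * c i with ht
  -- membership criterion
  have hmem : ∀ x : Fin n → ℤ, x ∈ rootD n → ∃ a : Fin n → ℤ, ∑ k, a k • f k = x := by
    intro x hx
    rw [hspan] at hx
    exact (Submodule.mem_span_range_iff_exists_fun ℤ).mp hx
  -- key sum formulas
  have hsum : ∀ (a : Fin n → ℤ), ∑ i, (∑ k, a k • f k) i = (∑ k, a k) * s := by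
    intro a
    simp only [Finset.sum_apply, Pi.smul_apply, smul_eq_mul]
    rw [Finset.sum_comm, Finset.sum_mul]
    refine Finset.sum_congr rfl fun k _ => ?_
    rw [← Finset.mul_sum, hf]
    simp only
    rw [sum_iter, hs]
  have halt : ∀ (a : Fin n → ℤ),
      ∑ i : Fin n, (-1 : ℤ) ^ (i : ℕ) * (∑ k, a k • f k) i
        = (∑ k : Fin n, (-1 : ℤ) ^ (k : ℕ) * a k) * t := by
    intro a
    simp only [Finset.sum_apply, Pi.smul_apply, smul_eq_mul, Finset.mul_sum]
    rw [Finset.sum_comm, Finset.sum_mul]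
    refine Finset.sum_congr rfl fun k _ => ?_
    have : ∑ i : Fin n, (-1 : ℤ) ^ (i : ℕ) * (a k * f k i)
        = a k * ∑ i : Fin n, (-1 : ℤ) ^ (i : ℕ) * f k i := by
      rw [Finset.mul_sum]; refine Finset.sum_congr rfl fun i _ => by ring
    rw [this, hf]
    simp only
    rw [alt_iter n heven, ht]
    ring
  -- s is even, since c = f 0 ∈ D_n
  have hc : c ∈ rootD n := by
    have : f ⟨0, by omega⟩ ∈ Submodule.span ℤ (Set.range f) :=
      Submodule.subset_span ⟨⟨0, by omega⟩, rfl⟩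
    have hfc : f ⟨0, by omega⟩ = c := by simp [hf]
    rw [hfc] at this
    rw [hspan]
    exact this
  have hs2 : (2 : ℤ) ∣ s := hc
  have ht2 : (2 : ℤ) ∣ t := by
    have := two_dvd_sub_alt c
    rw [← hs, ← ht] at this
    omega
  -- x₁ = 2 e₀ shows s ≠ 0
  have hsne : s ≠ 0 := by
    set x₁ : Fin n → ℤ := Pi.single (⟨0, by omega⟩ : Fin n) 2 with hx₁
    have hx₁mem : x₁ ∈ rootD n := by
      show (2 : ℤ) ∣ ∑ i, x₁ i
      rw [hx₁, Finset.sum_pi_single']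
      simp
    obtain ⟨a, ha⟩ := hmem x₁ hx₁mem
    have h1 : ∑ i, x₁ i = (∑ k, a k) * s := by rw [← ha]; exact hsum a
    rw [hx₁, Finset.sum_pi_single'] at h1
    simp at h1
    intro hs0
    rw [hs0, mul_zero] at h1
    exact two_ne_zero h1
  -- x₀ = e₀ - e₁
  set x₀ : Fin n → ℤ :=
    Pi.single (⟨0, by omega⟩ : Fin n) 1 - Pi.single (⟨1, by omega⟩ : Fin n) 1 with hx₀
  have hne01 : (⟨0, by omega⟩ : Fin n) ≠ ⟨1, by omega⟩ := by
    intro h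
    exact absurd (congrArg Fin.val h) (by simp)
  have hsx₀ : ∑ i, x₀ i = 0 := by
    simp [hx₀, Finset.sum_sub_distrib, Finset.sum_pi_single']
  have htx₀ : ∑ i : Fin n, (-1 : ℤ) ^ (i : ℕ) * x₀ i = 2 := by
    rw [hx₀]
    simp only [Pi.sub_apply, mul_sub, Finset.sum_sub_distrib]
    have h0 : ∑ i : Fin n, (-1 : ℤ) ^ (i : ℕ) * (Pi.single (⟨0, by omega⟩ : Fin n) 1 : Fin n → ℤ) i = 1 := by
      rw [Finset.sum_eq_single (⟨0, by omega⟩ : Fin n)]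
      · simp
      · intro b _ hb; rw [Pi.single_eq_of_ne hb, mul_zero]
      · intro h; exact absurd (Finset.mem_univ _) h
    have h1 : ∑ i : Fin n, (-1 : ℤ) ^ (i : ℕ) * (Pi.single (⟨1, by omega⟩ : Fin n) 1 : Fin n → ℤ) i = -1 := by
      rw [Finset.sum_eq_single (⟨1, by omega⟩ : Fin n)]
      · simp
      · intro b _ hb; rw [Pi.single_eq_of_ne hb, mul_zero]
      · intro h; exact absurd (Finset.mem_univ _) h
    rw [h0, h1]
    ring
  have hx₀mem : x₀ ∈ rootD n := by
    show (2 : ℤ) ∣ ∑ i, x₀ i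
    rw [hsx₀]
    exact dvd_zero 2
  obtain ⟨b, hb⟩ := hmem x₀ hx₀mem
  have hA : 0 = (∑ k, b k) * s := by rw [← hsx₀, ← hb]; exact hsum b
  have hB : 2 = (∑ k : Fin n, (-1 : ℤ) ^ (k : ℕ) * b k) * t := by
    rw [← htx₀, ← hb]; exact halt b
  have hA0 : (∑ k, b k) = 0 := by
    rcases mul_eq_zero.mp hA.symm with h | h
    · exact h
    · exact absurd h hsne
  have hBpar : (2 : ℤ) ∣ ∑ k : Fin n, (-1 : ℤ) ^ (k : ℕ) * b k := by
    have := two_dvd_sub_alt b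
    rw [hA0] at this
    omega
  -- contradiction: 4 ∣ 2
  obtain ⟨B', hB'⟩ := hBpar
  obtain ⟨t', ht'⟩ := ht2
  rw [hB', ht'] at hB
  have h4 : (4 : ℤ) ∣ 2 := ⟨B' * t', by linarith⟩
  norm_num at h4

end
end

section
/- Let K ⊂ ℂ be a Galois number field of degree d with Galois group G = Gal(K/ℚ), let e : Fin d → G be a bijective enumeration of G, and define Σ : K → (Fin d → ℂ) by Σ(α)(j) = e(j)(α). Suppose the image Λ_K = Σ(𝓞_K) satisfies ρ(Λ_K) = Λ_K. Then the element τ := e(0)⁻¹ ∘ e(d−1) ∈ G generates G (so the extension K/ℚ is cyclic), one has e(j) ∘ τ = e(j−1) for all 1 ≤ j ≤ d−1 together with e(0) ∘ τ = e(d−1), and ρ(Σ(α)) = Σ(τ(α)) for every α ∈ 𝓞_K. -/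
noncomputable section

open NumberField

/-- The rotation shift operator on `ℂ^d`: `ρ(c₁, …, c_d) = (c_d, c₁, …, c_{d-1})`. -/
def rotShiftC (d : ℕ) (c : Fin d → ℂ) : Fin d → ℂ :=
  fun i => c ((finRotate d).symm i)

/-- The embedding `Σ : K → ℂ^d`, `Σ(α)(j) = e(j)(α)`, for an enumeration `e` of the
Galois group of `K/ℚ`. -/
def embEnum (K : IntermediateField ℚ ℂ) (d : ℕ) (e : Fin d ≃ (K ≃ₐ[ℚ] K)) :
    K → (Fin d → ℂ) := fun α j => ((e j) α : ℂ)

/-- The lattice `Λ_K = Σ(𝓞_K) ⊆ ℂ^d`. -/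
def latticeK (K : IntermediateField ℚ ℂ) (d : ℕ) (e : Fin d ≃ (K ≃ₐ[ℚ] K)) :
    Set (Fin d → ℂ) :=
  embEnum K d e '' (Set.range (algebraMap (𝓞 K) K))

set_option maxHeartbeats 800000 in
/-- If the lattice `Λ_K` of a Galois number field `K` is cyclic, then
`τ = e(0)⁻¹ ∘ e(d-1)` generates the Galois group (so `K/ℚ` is a cyclic extension),
`e(j) ∘ τ = e(j-1)` for `1 ≤ j ≤ d-1`, `e(0) ∘ τ = e(d-1)`, and the rotation shift
`ρ` acts on `Λ_K` as `τ` acts on `𝓞_K`: `ρ(Σ(α)) = Σ(τ(α))`. -/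
theorem cyclic_latticeK_galois (K : IntermediateField ℚ ℂ) [NumberField K] [IsGalois ℚ K]
    (d : ℕ) (hd : d = Module.finrank ℚ K) (h0 : 0 < d)
    (e : Fin d ≃ (K ≃ₐ[ℚ] K))
    (hcyc : rotShiftC d '' latticeK K d e = latticeK K d e) :
    (∀ g : K ≃ₐ[ℚ] K,
      g ∈ Subgroup.zpowers ((e ⟨0, h0⟩)⁻¹ * e ⟨d - 1, Nat.sub_lt h0 Nat.one_pos⟩)) ∧
    (∀ j : Fin d, (j : ℕ) ≠ 0 →
      e j * ((e ⟨0, h0⟩)⁻¹ * e ⟨d - 1, Nat.sub_lt h0 Nat.one_pos⟩) =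
        e ⟨(j : ℕ) - 1, Nat.lt_of_le_of_lt (Nat.sub_le _ _) j.isLt⟩) ∧
    (e ⟨0, h0⟩ * ((e ⟨0, h0⟩)⁻¹ * e ⟨d - 1, Nat.sub_lt h0 Nat.one_pos⟩) =
      e ⟨d - 1, Nat.sub_lt h0 Nat.one_pos⟩) ∧
    (∀ α : 𝓞 K, rotShiftC d (embEnum K d e (algebraMap (𝓞 K) K α)) =
      embEnum K d e
        (((e ⟨0, h0⟩)⁻¹ * e ⟨d - 1, Nat.sub_lt h0 Nat.one_pos⟩)
          (algebraMap (𝓞 K) K α))) := by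
  classical
  obtain ⟨n, rfl⟩ : ∃ n, d = n + 1 := ⟨d - 1, by omega⟩
  set τ : ↥K ≃ₐ[ℚ] ↥K :=
    (e ⟨0, h0⟩)⁻¹ * e ⟨n + 1 - 1, Nat.sub_lt h0 Nat.one_pos⟩ with hτ
  -- Step 1: the rotation of Σα lands back in the lattice
  have hmain : ∀ α : 𝓞 K, ∃ β : 𝓞 K, ∀ i : Fin (n + 1),
      e ((finRotate (n + 1)).symm i) (algebraMap (𝓞 K) K α)
        = e i (algebraMap (𝓞 K) K β) := by
    intro α
    have hmem : embEnum K (n + 1) e (algebraMap (𝓞 K) K α) ∈ latticeK K (n + 1) e :=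
      ⟨_, ⟨α, rfl⟩, rfl⟩
    have hmem2 : rotShiftC (n + 1) (embEnum K (n + 1) e (algebraMap (𝓞 K) K α))
        ∈ latticeK K (n + 1) e := by
      rw [← hcyc]; exact ⟨_, hmem, rfl⟩
    obtain ⟨x, ⟨β, rfl⟩, hx⟩ := hmem2
    refine ⟨β, fun i => ?_⟩
    have h := congrFun hx i
    simp only [rotShiftC, embEnum] at h
    exact Subtype.coe_injective h.symm
  -- Step 2: σ_i := (e i)⁻¹ * e (i-1) is independent of i
  have hσ : ∀ i j : Fin (n + 1),
      (e i)⁻¹ * e ((finRotate (n + 1)).symm i)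
        = (e j)⁻¹ * e ((finRotate (n + 1)).symm j) := by
    intro i j
    have hOK : ∀ α : 𝓞 K,
        ((e i)⁻¹ * e ((finRotate (n + 1)).symm i)) (algebraMap (𝓞 K) K α)
          = ((e j)⁻¹ * e ((finRotate (n + 1)).symm j)) (algebraMap (𝓞 K) K α) := by
      intro α
      obtain ⟨β, hβ⟩ := hmain α
      rw [AlgEquiv.mul_apply, AlgEquiv.mul_apply, hβ i, hβ j,
        ← AlgEquiv.mul_apply, inv_mul_cancel, ← AlgEquiv.mul_apply, inv_mul_cancel]
    apply AlgEquiv.ext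
    intro x
    obtain ⟨a, b, -, rfl⟩ := IsFractionRing.div_surjective (A := 𝓞 K) x
    rw [map_div₀, map_div₀, hOK a, hOK b]
  -- identify indices under the rotation
  have hsymm0 : (finRotate (n + 1)).symm ⟨0, h0⟩
      = ⟨n + 1 - 1, Nat.sub_lt h0 Nat.one_pos⟩ := by
    rw [Equiv.symm_apply_eq, finRotate_succ_apply]
    ext
    simp [Fin.add_def]
  have hτ' : ∀ i : Fin (n + 1), e i * τ = e ((finRotate (n + 1)).symm i) := by
    intro i
    rw [hτ, ← hsymm0, ← hσ i ⟨0, h0⟩, mul_inv_cancel_left]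
  have h2 : ∀ j : Fin (n + 1), (j : ℕ) ≠ 0 →
      e j * τ = e ⟨(j : ℕ) - 1, Nat.lt_of_le_of_lt (Nat.sub_le _ _) j.isLt⟩ := by
    intro j hj
    rw [hτ' j]
    congr 1
    rw [Equiv.symm_apply_eq, finRotate_succ_apply]
    have hj1 : (j : ℕ) < n + 1 := j.isLt
    ext
    rw [Fin.val_add_one]
    split
    · next hlast =>
        have := congrArg Fin.val hlast
        simp only [Fin.val_last] at this
        omega
    · simp only []
      omega
  have h3 : e ⟨0, h0⟩ * τ = e ⟨n + 1 - 1, Nat.sub_lt h0 Nat.one_pos⟩ := by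
    rw [hτ, mul_inv_cancel_left]
  have h4 : ∀ α : 𝓞 K, rotShiftC (n + 1) (embEnum K (n + 1) e (algebraMap (𝓞 K) K α)) =
      embEnum K (n + 1) e (τ (algebraMap (𝓞 K) K α)) := by
    intro α
    funext i
    show ((e ((finRotate (n + 1)).symm i)) (algebraMap (𝓞 K) K α) : ℂ) = _
    rw [← hτ' i]
    rfl
  -- generation of the Galois group
  have hE : ∀ k (hk : k < n + 1), e ⟨k, hk⟩ = e ⟨0, h0⟩ * (τ⁻¹) ^ k := by
    intro k
    induction k with
    | zero => intro hk; rw [pow_zero, mul_one]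
    | succ m ih =>
      intro hk
      have hm : m < n + 1 := by omega
      have hstep := h2 ⟨m + 1, hk⟩ (Nat.succ_ne_zero m)
      have hidx : (⟨((⟨m + 1, hk⟩ : Fin (n + 1)) : ℕ) - 1,
          Nat.lt_of_le_of_lt (Nat.sub_le _ _) (Fin.isLt _)⟩ : Fin (n + 1))
            = ⟨m, hm⟩ := rfl
      rw [hidx, ih hm] at hstep
      have heq : e ⟨m + 1, hk⟩ = e ⟨0, h0⟩ * τ⁻¹ ^ m * τ⁻¹ := by
        rw [eq_mul_inv_iff_mul_eq, hstep]
      rw [heq, pow_succ, mul_assoc]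
  have h1 : ∀ g : ↥K ≃ₐ[ℚ] ↥K, g ∈ Subgroup.zpowers τ := by
    have hone : e ⟨0, h0⟩ = τ ^ ((e.symm 1 : Fin (n + 1)) : ℕ) := by
      have h : e (e.symm 1) = e ⟨0, h0⟩ * τ⁻¹ ^ ((e.symm 1 : Fin (n + 1)) : ℕ) :=
        hE _ (Fin.isLt _)
      rw [Equiv.apply_symm_apply] at h
      rw [← inv_inv (τ ^ _), ← inv_pow, eq_inv_iff_mul_eq_one, ← h]
    intro g
    rw [Subgroup.mem_zpowers_iff]
    refine ⟨(((e.symm 1 : Fin (n + 1)) : ℕ) : ℤ)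
      - (((e.symm g : Fin (n + 1)) : ℕ) : ℤ), ?_⟩
    have hg : e (e.symm g) = e ⟨0, h0⟩ * τ⁻¹ ^ ((e.symm g : Fin (n + 1)) : ℕ) :=
      hE _ (Fin.isLt _)
    rw [Equiv.apply_symm_apply] at hg
    conv_rhs => rw [hg]
    rw [hone, inv_pow, zpow_sub, zpow_natCast, zpow_natCast]
  exact ⟨h1, h2, h3, h4⟩


end
end
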